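/- arXiv:1412.1724 — 7 statements merged into one kernel-verified Lean document; each statement's English description precedes it below -/
import Mathlib

section
/- Let m ≥ 1 and k ∈ {±1}^m with ∏_{j=1}^m k_j = 1, and let a^k(φ) be the associated symbol matrix. Then there is a polynomial p of degree m, independent of φ, such that det(a^k(φ) − λ I_m) = (−1)^m ( p(λ) − 2cos(φ) ) for all φ ∈ [0,2π). Consequently, the set { λ ∈ ℂ : det(a^k(φ) − λ I_m) = 0 for some φ ∈ [0,2π) } equals p⁻¹([−2,2]). -/
open Complex Matrix

/-- The symbol matrix `a^k(φ) ∈ ℂ^{m×m}` of an `m`-periodic tridiagonal sign operator: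
superdiagonal entries `1`, subdiagonal entries `k₁,…,k_{m-1}` (here `k 0, …, k (m-2)`),
corner entries `k_m e^{iφ}` at position `(1,m)` and `e^{-iφ}` at position `(m,1)`.
The entries are defined as sums so that for small `m` overlapping positions add up
(e.g. for `m = 1` the matrix is `(k₁ e^{iφ} + e^{-iφ})`). -/
noncomputable def symb (m : ℕ) (k : ℕ → ℂ) (φ : ℝ) : Matrix (Fin m) (Fin m) ℂ :=
  Matrix.of fun r c =>
    (if (c : ℕ) = (r : ℕ) + 1 then 1 else 0) +
    (if (r : ℕ) = (c : ℕ) + 1 then k c else 0) +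
    (if (r : ℕ) = 0 ∧ (c : ℕ) = m - 1 then k c * Complex.exp (φ * Complex.I) else 0) +
    (if (r : ℕ) = m - 1 ∧ (c : ℕ) = 0 then Complex.exp (-φ * Complex.I) else 0)

/-! Expanding along the two corner entries `a = kₘ e^{iφ}` and `b = e^{-iφ}`, the determinant of
`a^k(φ) − λ` is `D + a C₁ + b C₂ + a b C₃`, where `D` and the cofactors `Cᵢ` depend only on the
tridiagonal part. Here `a b = kₘ` does not depend on `φ`, and `C₁, C₂` are minors of bidiagonal
shape, hence triangular: `C₁ = (−1)^{m−1} k₁ ⋯ k_{m−1}` and `C₂ = (−1)^{m−1}`. When `∏ kⱼ = 1` the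
`φ`-dependence is therefore exactly `(−1)^{m−1} (e^{iφ} + e^{−iφ}) = (−1)^{m−1} 2 cos φ`, so
`p = χ_{a^k(0)} + 2` works, and the spectral set is the preimage under `p` of the range
`[−2, 2]` of `2 cos`. -/

namespace Matrix

variable {n R : Type*} [Fintype n] [DecidableEq n] [CommRing R]

theorem det_sub_smul_one (M : Matrix n n R) (t : R) :
    (M - t • 1).det = (-1) ^ Fintype.card n * M.charpoly.eval t := by
  rw [← neg_sub, det_neg, eval_charpoly, smul_one_eq_diagonal]
  rfl

theorem det_add_single (M : Matrix n n R) (i j : n) (a : R) :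
    det (M + single i j a) = det M + a * adjugate M j i := by
  have hrow : M + single i j a = updateRow M i (M i + a • Pi.single j 1) := by
    ext r c
    rcases eq_or_ne r i with rfl | hr
    · rcases eq_or_ne c j with rfl | hc
      · simp
      · simp [hc, single_apply_of_col_ne _ _ hc.symm]
    · simp [hr, hr.symm]
  rw [hrow, det_updateRow_add, updateRow_eq_self, det_updateRow_smul, adjugate_apply]

theorem det_add_single_add_single (M : Matrix n n R) {i j : n} (hij : i ≠ j) (a b : R) :
    det (M + single i j a + single j i b) =
      det M + a * adjugate M j i + b * adjugate M i j +
        a * b * adjugate (updateRow M j (Pi.single i 1)) j i := by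
  have hrow : updateRow (M + single i j a) j (Pi.single i 1) =
      updateRow M j (Pi.single i 1) + single i j a := by
    ext r c
    rcases eq_or_ne r j with rfl | hr
    · simp [single_apply_of_row_ne hij]
    · simp [hr]
  rw [det_add_single, det_add_single, adjugate_apply (M + single i j a), hrow, det_add_single,
    ← adjugate_apply]
  ring

theorem adjugate_last_zero_eq_prod_subdiag {m : ℕ} (M : Matrix (Fin (m + 1)) (Fin (m + 1)) R)
    (hM : ∀ r c : Fin (m + 1), (c : ℕ) + 1 < r → M r c = 0) :
    adjugate M (Fin.last m) 0 = (-1) ^ m * ∏ i : Fin m, M i.succ i.castSucc := by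
  set N := updateRow M 0 (Pi.single (Fin.last m) 1)
  have htri : (N.submatrix Fin.succ (Fin.last m).succAbove).IsUpperTriangular := by
    intro i j hji
    simpa [N] using hM i.succ j.castSucc (by simpa using hji)
  rw [adjugate_apply, det_succ_row_zero,
    Fintype.sum_eq_single (Fin.last m) fun j hj => by simp [hj],
    det_of_isUpperTriangular htri]
  simp [N]

theorem adjugate_zero_last_eq_prod_superdiag {m : ℕ} (M : Matrix (Fin (m + 1)) (Fin (m + 1)) R)
    (hM : ∀ r c : Fin (m + 1), (r : ℕ) + 1 < c → M r c = 0) :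
    adjugate M 0 (Fin.last m) = (-1) ^ m * ∏ i : Fin m, M i.castSucc i.succ := by
  rw [← transpose_apply (adjugate M), adjugate_transpose,
    adjugate_last_zero_eq_prod_subdiag Mᵀ fun r c h => hM c r h]
  rfl

end Matrix

def tridiag (m : ℕ) (k : ℕ → ℂ) : Matrix (Fin m) (Fin m) ℂ :=
  of fun r c => (if (c : ℕ) = r + 1 then 1 else 0) + (if (r : ℕ) = c + 1 then k c else 0)

theorem symb_eq_tridiag_add_single (n : ℕ) (k : ℕ → ℂ) (φ : ℝ) :
    symb (n + 1) k φ = tridiag (n + 1) k + single 0 (Fin.last n) (k n * exp (φ * I)) +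
      single (Fin.last n) 0 (exp (-φ * I)) := by
  ext r c
  simp only [symb, tridiag, single, of_apply, Matrix.add_apply, Fin.ext_iff, Fin.val_last,
    Fin.val_zero, Nat.add_sub_cancel]
  split_ifs <;> grind

theorem adjugate_tridiag_sub_smul_one_last_zero (n : ℕ) (k : ℕ → ℂ) (lam : ℂ) :
    adjugate (tridiag (n + 1) k - lam • 1) (Fin.last n) 0 =
      (-1) ^ n * ∏ j ∈ Finset.range n, k j := by
  rw [adjugate_last_zero_eq_prod_subdiag, ← Fin.prod_univ_eq_prod_range]
  · simp [tridiag, one_apply, Fin.ext_iff, add_assoc]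
  · intro r c h
    simp only [tridiag, Matrix.sub_apply, of_apply, Matrix.smul_apply, one_apply, Fin.ext_iff,
      smul_eq_mul, mul_ite, mul_one, mul_zero]
    grind

theorem adjugate_tridiag_sub_smul_one_zero_last (n : ℕ) (k : ℕ → ℂ) (lam : ℂ) :
    adjugate (tridiag (n + 1) k - lam • 1) 0 (Fin.last n) = (-1) ^ n := by
  rw [adjugate_zero_last_eq_prod_superdiag]
  · simp [tridiag, one_apply, Fin.ext_iff, add_assoc]
  · intro r c h
    simp only [tridiag, Matrix.sub_apply, of_apply, Matrix.smul_apply, one_apply, Fin.ext_iff,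
      smul_eq_mul, mul_ite, mul_one, mul_zero]
    grind

theorem det_symb_sub_smul_one_eq_add_cos (n : ℕ) (k : ℕ → ℂ)
    (hprod : ∏ j ∈ Finset.range (n + 1), k j = 1) (φ : ℝ) (lam : ℂ) :
    (symb (n + 1) k φ - lam • 1).det =
      (symb (n + 1) k 0 - lam • 1).det + (-1) ^ n * (2 * Real.cos φ - 2) := by
  have hcos : 2 * (Real.cos φ : ℂ) = exp (φ * I) + exp (-φ * I) := by
    rw [ofReal_cos, two_cos]
  have hexp : exp (φ * I) * exp (-φ * I) = 1 := by
    rw [← exp_add, neg_mul, add_neg_cancel, exp_zero]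
  rcases n with _ | n
  · have hk : k 0 = 1 := by simpa using hprod
    have hdet : ∀ ψ : ℝ, (symb 1 k ψ - lam • 1).det = exp (ψ * I) + exp (-ψ * I) - lam := by
      intro ψ
      simp [symb, hk]
    rw [hdet, hdet, ← hcos]
    simp only [ofReal_zero, zero_mul, neg_zero, exp_zero]
    ring
  have hdecomp : ∀ ψ : ℝ, symb (n + 2) k ψ - lam • 1 =
      (tridiag (n + 2) k - lam • 1) + single 0 (Fin.last (n + 1)) (k (n + 1) * exp (ψ * I)) +
        single (Fin.last (n + 1)) 0 (exp (-ψ * I)) := by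
    intro ψ
    rw [symb_eq_tridiag_add_single]
    abel
  set T := tridiag (n + 2) k - lam • 1
  set C := adjugate (updateRow T (Fin.last (n + 1)) (Pi.single 0 1)) (Fin.last (n + 1)) 0
  have h0 : (0 : Fin (n + 2)) ≠ Fin.last (n + 1) := Fin.last_pos.ne
  rw [hdecomp, hdecomp, det_add_single_add_single _ h0, det_add_single_add_single _ h0,
    adjugate_tridiag_sub_smul_one_last_zero, adjugate_tridiag_sub_smul_one_zero_last]
  rw [Finset.prod_range_succ] at hprod
  simp only [ofReal_zero, zero_mul, neg_zero, exp_zero]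
  linear_combination
    (-1) ^ (n + 1) * (exp (φ * I) - 1) * hprod + k (n + 1) * C * hexp + (-1) ^ n * hcos

theorem image_two_mul_cos_Ico :
    (fun φ => 2 * Real.cos φ) '' Set.Ico 0 (2 * Real.pi) = Set.Icc (-2) 2 := by
  apply Set.Subset.antisymm
  · rintro _ ⟨φ, -, rfl⟩
    constructor <;> linarith [Real.neg_one_le_cos φ, Real.cos_le_one φ]
  · rintro x ⟨hx₁, hx₂⟩
    refine ⟨Real.arccos (x / 2),
      ⟨Real.arccos_nonneg _, (Real.arccos_le_pi _).trans_lt (by linarith [Real.pi_pos])⟩, ?_⟩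
    show 2 * Real.cos _ = x
    rw [Real.cos_arccos (by linarith) (by linarith)]
    ring

theorem det_symb_eq_of_prod_one_general (m : ℕ) (hm : 1 ≤ m) (k : ℕ → ℂ)
    (hprod : ∏ j ∈ Finset.range m, k j = 1) :
    ∃ p : Polynomial ℂ, p.natDegree = m ∧
      (∀ (φ : ℝ) (lam : ℂ),
        (symb m k φ - lam • 1).det = (-1) ^ m * (p.eval lam - 2 * Real.cos φ)) ∧
      {lam : ℂ | ∃ φ ∈ Set.Ico (0 : ℝ) (2 * Real.pi), (symb m k φ - lam • 1).det = 0} =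
        {lam : ℂ | ∃ x ∈ Set.Icc (-2 : ℝ) 2, p.eval lam = (x : ℂ)} := by
  obtain ⟨n, rfl⟩ : ∃ n, m = n + 1 := ⟨m - 1, by omega⟩
  set p := (symb (n + 1) k 0).charpoly + Polynomial.C 2
  have hform : ∀ (φ : ℝ) (lam : ℂ),
      (symb (n + 1) k φ - lam • 1).det = (-1) ^ (n + 1) * (p.eval lam - 2 * Real.cos φ) := by
    intro φ lam
    rw [det_symb_sub_smul_one_eq_add_cos n k hprod, det_sub_smul_one, Fintype.card_fin]
    simp only [p, Polynomial.eval_add, Polynomial.eval_C]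
    ring
  refine ⟨p, ?_, hform, ?_⟩
  · rw [Polynomial.natDegree_add_C, charpoly_natDegree_eq_dim, Fintype.card_fin]
  · ext lam
    simp [hform, sub_eq_zero, ← image_two_mul_cos_Ico]

/-- If `∏ⱼ kⱼ = 1` there is a polynomial `p` of degree `m`, independent of `φ`,
with `det(a^k(φ) − λIₘ) = (−1)^m (p(λ) − 2cos φ)`; consequently
`{λ : det(a^k(φ) − λIₘ) = 0 for some φ ∈ [0,2π)} = p⁻¹([−2,2])`. -/
theorem det_symb_eq_of_prod_one (m : ℕ) (hm : 1 ≤ m) (k : ℕ → ℂ)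
    (hk : ∀ i < m, k i = 1 ∨ k i = -1)
    (hprod : ∏ j ∈ Finset.range m, k j = 1) :
    ∃ p : Polynomial ℂ, p.natDegree = m ∧
      (∀ (φ : ℝ) (lam : ℂ),
        (symb m k φ - lam • 1).det = (-1) ^ m * (p.eval lam - 2 * Real.cos φ)) ∧
      {lam : ℂ | ∃ φ ∈ Set.Ico (0 : ℝ) (2 * Real.pi), (symb m k φ - lam • 1).det = 0} =
        {lam : ℂ | ∃ x ∈ Set.Icc (-2 : ℝ) 2, p.eval lam = (x : ℂ)} :=
  det_symb_eq_of_prod_one_general m hm k hprod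
end

section
/- Let m ≥ 1 and k ∈ {±1}^m with ∏_{j=1}^m k_j = 1. Then for every φ ∈ [0,2π), the matrices a^k(φ) and a^k(2π − φ) have the same characteristic polynomial, and hence the same spectrum. -/
/-! The diagonal sign matrix `D = diag(1, k₁, k₁k₂, …, k₁⋯k_{m-1})` satisfies `D² = 1` and gauges the
transpose of `a^k(φ)` into `a^k(-φ)`: conjugation by `D` multiplies the `(i, j)` entry by
`D_ii D_jj`, which turns the superdiagonal `kᵢ` of the transpose into `1` and its subdiagonal
`1` into `kᵢ`, while `∏ kⱼ = 1` makes the corner factors come out right. Since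
`a^k(-φ) = a^k(2π - φ)`, and transposition and conjugation by an involution preserve the
characteristic polynomial, the theorem follows. -/

open Complex Matrix

open Finset

theorem Matrix.charpoly_mul_mul_of_mul_self_eq_one {n R : Type*} [Fintype n] [DecidableEq n]
    [CommRing R] {D : Matrix n n R} (hD : D * D = 1) (A : Matrix n n R) :
    (D * A * D).charpoly = A.charpoly := by
  rw [charpoly_mul_comm, ← mul_assoc, hD, one_mul]

theorem Matrix.spectrum_eq_of_charpoly_eq {n R : Type*} [Fintype n] [DecidableEq n] [CommRing R]
    {A B : Matrix n n R} (h : A.charpoly = B.charpoly) : spectrum R A = spectrum R B := by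
  ext μ
  rw [mem_spectrum_iff_not_isUnit_eval_charpoly, mem_spectrum_iff_not_isUnit_eval_charpoly, h]

theorem symb_two_pi_sub (m : ℕ) (k : ℕ → ℂ) (φ : ℝ) :
    symb m k (2 * Real.pi - φ) = symb m k (-φ) := by
  have h₁ : ((2 * Real.pi - φ : ℝ) : ℂ) * I = ((-φ : ℝ) : ℂ) * I + 2 * Real.pi * I := by
    push_cast; ring
  have h₂ : -((2 * Real.pi - φ : ℝ) : ℂ) * I = -((-φ : ℝ) : ℂ) * I - 2 * Real.pi * I := by
    push_cast; ring
  simp only [symb, h₁, h₂, exp_periodic _, exp_periodic.sub_eq]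

theorem prod_range_mul_self_eq_one {M : Type*} [CommMonoid M] {k : ℕ → M} {n : ℕ}
    (hk : ∀ i < n, k i * k i = 1) : (∏ j ∈ range n, k j) * ∏ j ∈ range n, k j = 1 := by
  rw [← prod_mul_distrib]
  exact prod_eq_one fun j hj => hk j (mem_range.mp hj)

noncomputable def signGauge (m : ℕ) (k : ℕ → ℂ) : Matrix (Fin m) (Fin m) ℂ :=
  diagonal fun i => ∏ j ∈ range i, k j

section SignGauge

variable {m : ℕ} {k : ℕ → ℂ}

theorem signGauge_mul_self (hk : ∀ i < m, k i * k i = 1) :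
    signGauge m k * signGauge m k = 1 := by
  rw [signGauge, diagonal_mul_diagonal, ← diagonal_one]
  exact congrArg diagonal <| funext fun i =>
    prod_range_mul_self_eq_one fun j hj => hk j (hj.trans i.isLt)

theorem signGauge_mul_transpose_symb_mul_signGauge (hk : ∀ i < m, k i * k i = 1)
    (hprod : ∏ j ∈ range m, k j = 1) (φ : ℝ) :
    signGauge m k * (symb m k φ)ᵀ * signGauge m k = symb m k (-φ) := by
  set d : ℕ → ℂ := fun i => ∏ j ∈ range i, k j
  have hsq : ∀ i ≤ m, d i * d i = 1 := fun i hi =>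
    prod_range_mul_self_eq_one fun j hj => hk j (hj.trans_le hi)
  have hsucc : ∀ i, d (i + 1) = d i * k i := fun i => prod_range_succ k i
  have hzero : d 0 = 1 := prod_range_zero k
  ext i j
  have hm : 0 < m := i.pos
  have hfull : d (m - 1) * k (m - 1) = 1 := by
    rw [← hsucc, Nat.sub_add_cancel hm]
    exact hprod
  have hlast : d (m - 1) = k (m - 1) := by
    linear_combination k (m - 1) * hfull - d (m - 1) * hk (m - 1) (Nat.sub_lt hm one_pos)
  simp only [signGauge, symb, mul_diagonal, diagonal_mul, transpose_apply, of_apply]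
  show d i * _ * d j = _
  -- match each term of the transposed entry with its counterpart in `a^k(-φ)`
  rw [show ∀ a b c e : ℂ, a + b + c + e = b + a + e + c from fun _ _ _ _ => by ring]
  simp only [mul_add, add_mul, mul_ite, ite_mul, mul_zero, zero_mul]
  congr 1; congr 1; congr 1
  · split_ifs with h
    · rw [h, hsucc]
      linear_combination k i * k i * hsq i i.isLt.le + hk i i.isLt
    · rfl
  · split_ifs with h
    · rw [h, hsucc]
      linear_combination k j * hsq j j.isLt.le
    · rfl
  · by_cases h : (i : ℕ) = 0 ∧ (j : ℕ) = m - 1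
    · rw [if_pos h.symm, if_pos h, h.1, h.2, hzero, hlast, ofReal_neg]
      ring
    · rw [if_neg (mt And.symm h), if_neg h]
  · by_cases h : (i : ℕ) = m - 1 ∧ (j : ℕ) = 0
    · rw [if_pos h.symm, if_pos h, h.1, h.2, hzero, ← mul_assoc, hfull, ofReal_neg, neg_neg]
      ring
    · rw [if_neg (mt And.symm h), if_neg h]

end SignGauge

theorem symb_charpoly_symm_general (m : ℕ) (k : ℕ → ℂ)
    (hk : ∀ i < m, k i = 1 ∨ k i = -1)
    (hprod : ∏ j ∈ Finset.range m, k j = 1)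
    (φ : ℝ) :
    (symb m k φ).charpoly = (symb m k (2 * Real.pi - φ)).charpoly ∧
      spectrum ℂ (symb m k φ) = spectrum ℂ (symb m k (2 * Real.pi - φ)) := by
  have hk_sq : ∀ i < m, k i * k i = 1 := fun i hi => by
    rcases hk i hi with h | h <;> rw [h] <;> norm_num
  have hcharpoly : (symb m k φ).charpoly = (symb m k (2 * Real.pi - φ)).charpoly := by
    rw [symb_two_pi_sub, ← signGauge_mul_transpose_symb_mul_signGauge hk_sq hprod,
      charpoly_mul_mul_of_mul_self_eq_one (signGauge_mul_self hk_sq), charpoly_transpose]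
  exact ⟨hcharpoly, spectrum_eq_of_charpoly_eq hcharpoly⟩

/-- If `∏ⱼ kⱼ = 1`, then for every `φ ∈ [0,2π)` the matrices `a^k(φ)` and
`a^k(2π − φ)` have the same characteristic polynomial, hence the same spectrum. -/
theorem symb_charpoly_symm (m : ℕ) (hm : 1 ≤ m) (k : ℕ → ℂ)
    (hk : ∀ i < m, k i = 1 ∨ k i = -1)
    (hprod : ∏ j ∈ Finset.range m, k j = 1)
    (φ : ℝ) (hφ : φ ∈ Set.Ico (0 : ℝ) (2 * Real.pi)) :
    (symb m k φ).charpoly = (symb m k (2 * Real.pi - φ)).charpoly ∧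
      spectrum ℂ (symb m k φ) = spectrum ℂ (symb m k (2 * Real.pi - φ)) :=
  symb_charpoly_symm_general m k hk hprod φ
end

section
/- Let m ≥ 1, k ∈ {±1}^m with ∏_{j=1}^m k_j = 1, and n ≥ 3. Let M ∈ ℂ^{nm×nm} be the block circulant matrix P ⊗ A_{-1} + I_n ⊗ B + P* ⊗ C built from the symbol decomposition of a^k. Then for every j ∈ {1,…,n−1} with j ≠ n/2, every eigenvalue λ of a^k(2πj/n) is an eigenvalue of M with eigenspace of dimension at least 2. -/
open Complex Matrix Kronecker

/-- The corner block `A₋₁ ∈ ℂ^{m×m}`: `(A₋₁)_{1,m} = k_m`, zeros elsewhere. -/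
def Am (m : ℕ) (k : ℕ → ℂ) : Matrix (Fin m) (Fin m) ℂ :=
  Matrix.of fun r c => if (r : ℕ) = 0 ∧ (c : ℕ) = m - 1 then k c else 0

/-- The tridiagonal block `B ∈ ℂ^{m×m}`: superdiagonal entries `1`, subdiagonal entries
`k₁,…,k_{m-1}`, zeros elsewhere. -/
def Bm (m : ℕ) (k : ℕ → ℂ) : Matrix (Fin m) (Fin m) ℂ :=
  Matrix.of fun r c =>
    (if (c : ℕ) = (r : ℕ) + 1 then 1 else 0) + (if (r : ℕ) = (c : ℕ) + 1 then k c else 0)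

/-- The corner block `C ∈ ℂ^{m×m}`: `C_{m,1} = 1`, zeros elsewhere. -/
def Cm (m : ℕ) : Matrix (Fin m) (Fin m) ℂ :=
  Matrix.of fun r c => if (r : ℕ) = m - 1 ∧ (c : ℕ) = 0 then 1 else 0

/-! Fourier modes block-diagonalize `M`: if `Eⁿ = 1` and `v` is an eigenvector of
`E⁻¹ A₋₁ + B + E C`, then `(Eⁱ v)ᵢ` is an eigenvector of `M` with the same eigenvalue.
For `E = e^{-2πij/n}` this block is `a^k(2πj/n)`; for `E = e^{2πij/n}` it is a matrix whose
transpose is conjugate to `a^k(2πj/n)` by the diagonal gauge `d_r = ∏_{r ≤ i < m-1} k_i`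
(this is where `∏ k_j = 1` enters), so both blocks have the eigenvalue `λ`. Since `n ∤ 2j`,
the two Fourier modes differ, and the two eigenvectors of `M` they produce are linearly
independent. -/

open Module End

section Kronecker

variable {R l l' m m' : Type*} [CommSemiring R] [Fintype l'] [Fintype m']

theorem kronecker_mulVec_outer (X : Matrix l l' R) (Y : Matrix m m' R) (x : l' → R)
    (v : m' → R) :
    (X ⊗ₖ Y) *ᵥ (fun p => x p.1 * v p.2) = fun p => (X *ᵥ x) p.1 * (Y *ᵥ v) p.2 := by
  ext p
  simp only [mulVec, dotProduct, kroneckerMap_apply, Fintype.sum_prod_type, Finset.sum_mul_sum]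
  exact Finset.sum_congr rfl fun _ _ => Finset.sum_congr rfl fun _ _ => by ring

end Kronecker

section CyclicShift

variable {n : ℕ} [NeZero n]

theorem pow_val_add_one {M : Type*} [Monoid M] {E : M} (hE : E ^ n = 1) (i : Fin n) :
    E ^ ((i + 1 : Fin n) : ℕ) = E ^ (i : ℕ) * E := by
  rw [Fin.val_add, Fin.val_one', Nat.add_mod_mod, ← pow_eq_pow_mod _ hE, pow_succ]

theorem pow_val_sub_one {G₀ : Type*} [GroupWithZero G₀] {E : G₀} (hE : E ^ n = 1)
    (i : Fin n) :
    E ^ ((i - 1 : Fin n) : ℕ) = E ^ (i : ℕ) * E⁻¹ := by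
  have hE0 : E ≠ 0 := by rintro rfl; simp [NeZero.ne n] at hE
  rw [eq_mul_inv_iff_mul_eq₀ hE0, ← pow_val_add_one hE, sub_add_cancel]

def IsCyclicShift {R : Type*} [Zero R] [One R] (P : Matrix (Fin n) (Fin n) R) : Prop :=
  ∀ i j : Fin n, P i j = if (i : ℕ) = ((j : ℕ) + 1) % n then 1 else 0

namespace IsCyclicShift

section Semiring

variable {R : Type*} [Semiring R] {P : Matrix (Fin n) (Fin n) R}

theorem apply_eq (hP : IsCyclicShift P) (i j : Fin n) : P i j = if j = i - 1 then 1 else 0 := by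
  have hij : (i : ℕ) = ((j : ℕ) + 1) % n ↔ j = i - 1 := by
    rw [eq_sub_iff_add_eq, Fin.ext_iff, Fin.val_add, Fin.val_one', Nat.add_mod_mod, eq_comm]
  simp only [hP i j, hij]

theorem mulVec_eq (hP : IsCyclicShift P) (x : Fin n → R) : P *ᵥ x = fun i => x (i - 1) := by
  ext i
  simp [mulVec, dotProduct, hP.apply_eq]

theorem conjTranspose_mulVec_eq [StarRing R] (hP : IsCyclicShift P) (x : Fin n → R) :
    Pᴴ *ᵥ x = fun i => x (i + 1) := by
  ext i
  simp [mulVec, dotProduct, conjTranspose_apply, hP.apply_eq, apply_ite star,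
    eq_sub_iff_add_eq]

end Semiring

variable {K : Type*} [Field K] [StarRing K] {P : Matrix (Fin n) (Fin n) K}
  {m : Type*} [Fintype m] {E : K}

theorem blockCirculant_mulVec_geom (hP : IsCyclicShift P) (hE : E ^ n = 1)
    (A B C : Matrix m m K) (v : m → K) :
    (P ⊗ₖ A + 1 ⊗ₖ B + Pᴴ ⊗ₖ C) *ᵥ (fun p => E ^ (p.1 : ℕ) * v p.2)
      = fun p => E ^ (p.1 : ℕ) * ((E⁻¹ • A + B + E • C) *ᵥ v) p.2 := by
  set x : Fin n → K := fun i => E ^ (i : ℕ)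
  rw [add_mulVec, add_mulVec, kronecker_mulVec_outer P A x v, kronecker_mulVec_outer 1 B x v,
    kronecker_mulVec_outer Pᴴ C x v, hP.mulVec_eq, hP.conjTranspose_mulVec_eq, one_mulVec]
  ext p
  simp only [x, Pi.add_apply, pow_val_add_one hE, pow_val_sub_one hE, add_mulVec, smul_mulVec,
    Pi.smul_apply, smul_eq_mul]
  ring

theorem geom_mem_eigenspace [DecidableEq m] (hP : IsCyclicShift P) (hE : E ^ n = 1)
    {A B C : Matrix m m K} {μ : K} {v : m → K}
    (hv : v ∈ eigenspace (toLin' (E⁻¹ • A + B + E • C)) μ) :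
    (fun p : Fin n × m => E ^ (p.1 : ℕ) * v p.2)
      ∈ eigenspace (toLin' (P ⊗ₖ A + 1 ⊗ₖ B + Pᴴ ⊗ₖ C)) μ := by
  rw [mem_eigenspace_iff, toLin'_apply] at hv ⊢
  rw [blockCirculant_mulVec_geom hP hE, hv]
  ext p
  simp only [Pi.smul_apply, smul_eq_mul]
  ring

end IsCyclicShift

end CyclicShift

theorem linearIndependent_geom_pair {K ι : Type*} [Field K] {n : ℕ} (hn : 1 < n) {E F : K}
    (hEF : E ≠ F) {v w : ι → K} (hv : v ≠ 0) (hw : w ≠ 0) :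
    LinearIndependent K
      ![fun p : Fin n × ι => E ^ (p.1 : ℕ) * v p.2, fun p => F ^ (p.1 : ℕ) * w p.2] := by
  rw [LinearIndependent.pair_iff]
  intro s t hst
  obtain ⟨a, ha⟩ : ∃ a, v a ≠ 0 := Function.ne_iff.mp hv
  obtain ⟨b, hb⟩ : ∃ b, w b ≠ 0 := Function.ne_iff.mp hw
  have hrow : ∀ (i : Fin n) (c : ι), s * (E ^ (i : ℕ) * v c) + t * (F ^ (i : ℕ) * w c) = 0 :=
    fun i c => by simpa using congrFun hst (i, c)
  have hs : s = 0 := by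
    have h0 := hrow ⟨0, by omega⟩ a
    have h1 := hrow ⟨1, hn⟩ a
    have : s * (E - F) * v a = 0 := by linear_combination h1 - F * h0
    simpa [sub_eq_zero, hEF, ha] using this
  subst hs
  simpa [hb] using hrow ⟨0, by omega⟩ b

theorem two_le_finrank_of_linearIndependent_pair {K V : Type*} [DivisionRing K] [AddCommGroup V]
    [Module K V] [FiniteDimensional K V] {S : Submodule K V} {u u' : V} (hu : u ∈ S)
    (hu' : u' ∈ S) (h : LinearIndependent K ![u, u']) : 2 ≤ finrank K S := by
  have hspan : Submodule.span K (Set.range ![u, u']) ≤ S := by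
    rw [Submodule.span_le, Set.range_subset_iff]
    intro i
    fin_cases i
    exacts [hu, hu']
  calc 2 = finrank K (Submodule.span K (Set.range ![u, u'])) := by
        rw [finrank_span_eq_card h, Fintype.card_fin]
    _ ≤ finrank K S := Submodule.finrank_mono hspan

theorem exists_eigenvector_of_mem_spectrum {K ι : Type*} [Field K] [Fintype ι] [DecidableEq ι]
    {A : Matrix ι ι K} {μ : K} (h : μ ∈ spectrum K A) :
    ∃ v, v ∈ eigenspace (toLin' A) μ ∧ v ≠ 0 := by
  rw [← spectrum_toLin', ← hasEigenvalue_iff_mem_spectrum] at h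
  obtain ⟨v, hv⟩ := h.exists_hasEigenvector
  exact ⟨v, hv.1, hv.2⟩

theorem IsPrimitiveRoot.inv_pow_ne_pow {K : Type*} [Field K] {ζ : K} {n j : ℕ}
    (hζ : IsPrimitiveRoot ζ n) (hj : 1 ≤ j) (hjn : j < n) (h2j : 2 * j ≠ n) :
    (ζ ^ j)⁻¹ ≠ ζ ^ j := by
  intro h
  obtain ⟨c, hc⟩ : n ∣ j * 2 := by
    rw [← hζ.pow_eq_one_iff_dvd, pow_mul,
      ← inv_mul_cancel₀ (pow_ne_zero j (hζ.ne_zero (by omega))), h, sq]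
  rcases Nat.lt_or_ge c 2 with hc2 | hc2
  · interval_cases c <;> omega
  · nlinarith [Nat.mul_le_mul_left n hc2]

theorem symb_eq_smul_Am_add_Bm_add_smul_Cm (m : ℕ) (k : ℕ → ℂ) (φ : ℝ) :
    symb m k φ = cexp (φ * I) • Am m k + Bm m k + cexp (-φ * I) • Cm m := by
  ext r c
  simp only [symb, Am, Bm, Cm, Matrix.add_apply, Matrix.smul_apply, of_apply, smul_eq_mul,
    mul_ite, mul_zero, mul_one]
  split_ifs <;> ring

theorem symb_two_pi_mul_div (m : ℕ) (k : ℕ → ℂ) (n j : ℕ) :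
    symb m k (2 * Real.pi * j / n) = cexp (2 * Real.pi * I / n) ^ j • Am m k + Bm m k
      + (cexp (2 * Real.pi * I / n) ^ j)⁻¹ • Cm m := by
  have hexp : cexp (↑(2 * Real.pi * j / n) * I) = cexp (2 * Real.pi * I / n) ^ j := by
    rw [← Complex.exp_nat_mul]; congr 1; push_cast; ring
  rw [symb_eq_smul_Am_add_Bm_add_smul_Cm, neg_mul, Complex.exp_neg, hexp]

def symbGauge (m : ℕ) (k : ℕ → ℂ) (r : Fin m) : ℂ :=
  ∏ i ∈ Finset.Ico (r : ℕ) (m - 1), k i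

section symbGauge

variable {m : ℕ} {k : ℕ → ℂ}

theorem symbGauge_of_val_eq_succ {r s : Fin m} (h : (s : ℕ) = r + 1) :
    symbGauge m k r = k r * symbGauge m k s := by
  rw [symbGauge, symbGauge, Finset.prod_eq_prod_Ico_succ_bot (by omega), h]

theorem symbGauge_of_val_eq_last {r : Fin m} (h : (r : ℕ) = m - 1) : symbGauge m k r = 1 := by
  simp [symbGauge, h]

theorem mul_symbGauge_of_val_eq_zero (hprod : ∏ j ∈ Finset.range m, k j = 1) {r : Fin m}
    (h : (r : ℕ) = 0) : k (m - 1) * symbGauge m k r = 1 := by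
  rw [symbGauge, h, ← Finset.range_eq_Ico, mul_comm, ← Finset.prod_range_succ,
    Nat.sub_add_cancel (by omega), hprod]

theorem symbGauge_ne_zero (hprod : ∏ j ∈ Finset.range m, k j = 1) (r : Fin m) :
    symbGauge m k r ≠ 0 := by
  have hk : ∀ i ∈ Finset.range m, k i ≠ 0 :=
    Finset.prod_ne_zero_iff.mp (hprod ▸ one_ne_zero)
  exact Finset.prod_ne_zero_iff.mpr fun i hi =>
    hk i (Finset.mem_range.mpr (by have := Finset.mem_Ico.mp hi; omega))

theorem Bm_transpose_mul_diagonal_symbGauge :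
    (Bm m k)ᵀ * diagonal (symbGauge m k) = diagonal (symbGauge m k) * Bm m k := by
  ext r c
  simp only [Bm, mul_diagonal, diagonal_mul, transpose_apply, of_apply]
  split_ifs with h₁ h₂ h₂
  · omega
  · rw [symbGauge_of_val_eq_succ h₁]; ring
  · rw [symbGauge_of_val_eq_succ h₂]; ring
  · ring

theorem Am_transpose_mul_diagonal_symbGauge (hprod : ∏ j ∈ Finset.range m, k j = 1) :
    (Am m k)ᵀ * diagonal (symbGauge m k) = diagonal (symbGauge m k) * Cm m := by
  ext r c
  simp only [Am, Cm, mul_diagonal, diagonal_mul, transpose_apply, of_apply]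
  split_ifs with h₁ h₂ h₂
  · rw [h₁.2, mul_symbGauge_of_val_eq_zero hprod h₁.1, symbGauge_of_val_eq_last h₁.2,
      mul_one]
  · exact absurd ⟨h₁.2, h₁.1⟩ h₂
  · exact absurd ⟨h₂.2, h₂.1⟩ h₁
  · ring

theorem Cm_transpose_mul_diagonal_symbGauge (hprod : ∏ j ∈ Finset.range m, k j = 1) :
    (Cm m)ᵀ * diagonal (symbGauge m k) = diagonal (symbGauge m k) * Am m k := by
  ext r c
  simp only [Am, Cm, mul_diagonal, diagonal_mul, transpose_apply, of_apply]
  split_ifs with h₁ h₂ h₂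
  · rw [h₁.1, symbGauge_of_val_eq_last h₁.1, mul_comm (symbGauge m k r),
      mul_symbGauge_of_val_eq_zero hprod h₁.2, one_mul]
  · exact absurd ⟨h₁.2, h₁.1⟩ h₂
  · exact absurd ⟨h₂.2, h₂.1⟩ h₁
  · ring

theorem charpoly_smul_Am_add_Bm_add_smul_Cm_inv (hprod : ∏ j ∈ Finset.range m, k j = 1)
    (F : ℂ) :
    (F⁻¹ • Am m k + Bm m k + F • Cm m).charpoly
      = (F • Am m k + Bm m k + F⁻¹ • Cm m).charpoly := by
  set D := diagonal (symbGauge m k)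
  have hD : IsUnit D.det := isUnit_iff_ne_zero.mpr <| by
    rw [det_diagonal]
    exact Finset.prod_ne_zero_iff.mpr fun r _ => symbGauge_ne_zero hprod r
  have hconj :
      (F⁻¹ • Am m k + Bm m k + F • Cm m)ᵀ * D = D * (F • Am m k + Bm m k + F⁻¹ • Cm m) := by
    simp only [transpose_add, transpose_smul, add_mul, mul_add, Matrix.smul_mul, Matrix.mul_smul,
      Am_transpose_mul_diagonal_symbGauge hprod, Bm_transpose_mul_diagonal_symbGauge,
      Cm_transpose_mul_diagonal_symbGauge hprod, D]
    abel
  calc (F⁻¹ • Am m k + Bm m k + F • Cm m).charpoly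
      = (F⁻¹ • Am m k + Bm m k + F • Cm m)ᵀ.charpoly := (charpoly_transpose _).symm
    _ = (D * ((F • Am m k + Bm m k + F⁻¹ • Cm m) * D⁻¹)).charpoly := by
      rw [← mul_assoc, ← hconj, mul_nonsing_inv_cancel_right _ _ hD]
    _ = (F • Am m k + Bm m k + F⁻¹ • Cm m).charpoly := by
      rw [charpoly_mul_comm, nonsing_inv_mul_cancel_right _ _ hD]

end symbGauge

theorem eigenspace_dim_ge_two_general
    (m : ℕ) (k : ℕ → ℂ)
    (hprod : ∏ j ∈ Finset.range m, k j = 1)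
    (n : ℕ)
    (P : Matrix (Fin n) (Fin n) ℂ)
    (hP : ∀ i j : Fin n, P i j = if (i : ℕ) = ((j : ℕ) + 1) % n then 1 else 0) :
    ∀ j : ℕ, 1 ≤ j → j ≤ n - 1 → 2 * j ≠ n →
      ∀ lam : ℂ, lam ∈ spectrum ℂ (symb m k (2 * Real.pi * j / n)) →
        2 ≤ Module.finrank ℂ
          (Module.End.eigenspace
            (Matrix.toLin' (P ⊗ₖ Am m k + 1 ⊗ₖ Bm m k + Pᴴ ⊗ₖ Cm m)) lam) := by
  intro j hj hjn h2j lam hlam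
  have : NeZero n := ⟨by omega⟩
  have hζ := Complex.isPrimitiveRoot_exp n (NeZero.ne n)
  set E := cexp (2 * Real.pi * I / n) ^ j
  have hE : E ^ n = 1 := by rw [pow_right_comm, hζ.pow_eq_one, one_pow]
  rw [symb_two_pi_mul_div] at hlam
  have hlam' : lam ∈ spectrum ℂ (E⁻¹ • Am m k + Bm m k + E • Cm m) := by
    rwa [Matrix.mem_spectrum_iff_isRoot_charpoly, charpoly_smul_Am_add_Bm_add_smul_Cm_inv hprod,
      ← Matrix.mem_spectrum_iff_isRoot_charpoly]
  obtain ⟨v, hv, hv0⟩ := exists_eigenvector_of_mem_spectrum hlam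
  obtain ⟨w, hw, hw0⟩ := exists_eigenvector_of_mem_spectrum hlam'
  exact two_le_finrank_of_linearIndependent_pair
    (IsCyclicShift.geom_mem_eigenspace hP (by rw [inv_pow, hE, inv_one]) (by rwa [inv_inv]))
    (IsCyclicShift.geom_mem_eigenspace hP hE hw)
    (linearIndependent_geom_pair (by omega) (hζ.inv_pow_ne_pow hj (by omega) h2j) hv0 hw0)

/-- If `∏ⱼ kⱼ = 1` and `n ≥ 3`, then for every `j ∈ {1,…,n−1}` with
`j ≠ n/2`, every eigenvalue `λ` of `a^k(2πj/n)` is an eigenvalue of the block circulant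
`M = P ⊗ A₋₁ + I ⊗ B + P* ⊗ C` with eigenspace of dimension at least `2`. -/
theorem eigenspace_dim_ge_two
    (m : ℕ) (hm : 1 ≤ m) (k : ℕ → ℂ) (hk : ∀ i < m, k i = 1 ∨ k i = -1)
    (hprod : ∏ j ∈ Finset.range m, k j = 1)
    (n : ℕ) (hn : 3 ≤ n)
    (P : Matrix (Fin n) (Fin n) ℂ)
    (hP : ∀ i j : Fin n, P i j = if (i : ℕ) = ((j : ℕ) + 1) % n then 1 else 0) :
    ∀ j : ℕ, 1 ≤ j → j ≤ n - 1 → 2 * j ≠ n →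
      ∀ lam : ℂ, lam ∈ spectrum ℂ (symb m k (2 * Real.pi * j / n)) →
        2 ≤ Module.finrank ℂ
          (Module.End.eigenspace
            (Matrix.toLin' (P ⊗ₖ Am m k + 1 ⊗ₖ Bm m k + Pᴴ ⊗ₖ Cm m)) lam) :=
  eigenspace_dim_ge_two_general m k hprod n P hP
end

section
/- Let m ≥ 1 and k ∈ {±1}^m with ∏_{j=1}^m k_j = 1, and let n ≥ 3. Then there exists a tridiagonal matrix A ∈ ℂ^{(nm−1)×(nm−1)} with zero diagonal and sub- and superdiagonal entries in {±1} such that for every j ∈ {1,…,n−1} with j ≠ n/2, every eigenvalue of the symbol matrix a^k(2πj/n) is an eigenvalue of A. -/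
/-!
Let `M` be the `nm × nm` periodic sign matrix (superdiagonal `1`, subdiagonal `k`), so that
`A` is `M` with its first row and column deleted. An eigenvector `v` of `a^k(φ)` spreads out to a
Bloch solution `X` of the three-term recurrence of `M` with `X (p + m) = e^{-iφ} X p`; when
`e^{inφ} = 1` it is `nm`-periodic. Since `∏ k = 1`, the diagonal gauge `diag (∏_{i<r} k i)`
conjugates `a^k(φ)ᵀ` into `a^k(-φ)`, so `λ` is also an eigenvalue of `a^k(-φ)` and yields a
second solution `Y` with `Y (p + m) = e^{iφ} Y p`. For `φ = 2πj/n` with `2j ≠ n` the two factors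
differ, so `X` and `Y` are independent and some combination `Z` vanishes at `0` without vanishing
identically. By periodicity `Z` also vanishes at `nm`, and `Z` on `1, …, nm - 1` is an eigenvector
of `A`.
-/

open Complex Matrix

lemma Matrix.spectrum_transpose {n R : Type*} [Fintype n] [DecidableEq n] [CommRing R]
    (A : Matrix n n R) : spectrum R Aᵀ = spectrum R A := by
  ext μ
  rw [spectrum.mem_iff, spectrum.mem_iff, ← Matrix.isUnit_transpose (algebraMap R _ μ - A),
    transpose_sub, Algebra.algebraMap_eq_smul_one, transpose_smul, transpose_one]

lemma Matrix.exists_mulVec_eq_smul_of_mem_spectrum {n K : Type*} [Fintype n] [DecidableEq n]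
    [Field K] {A : Matrix n n K} {μ : K} (h : μ ∈ spectrum K A) :
    ∃ v ≠ 0, A *ᵥ v = μ • v := by
  rw [← Matrix.spectrum_toLin', ← Module.End.hasEigenvalue_iff_mem_spectrum] at h
  obtain ⟨v, hv⟩ := h.exists_hasEigenvector
  exact ⟨v, hv.2, by simpa using hv.apply_eq_smul⟩

lemma IsPrimitiveRoot.pow_inv_ne_pow {K : Type*} [Field K] {ζ : K} {n j : ℕ}
    (hζ : IsPrimitiveRoot ζ n) (hn : n ≠ 0) (h : ¬n ∣ 2 * j) : (ζ ^ j)⁻¹ ≠ ζ ^ j := by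
  intro hinv
  apply h
  rw [← hζ.pow_eq_one_iff_dvd, mul_comm, pow_mul, sq]
  nth_rw 1 [← hinv]
  exact inv_mul_cancel₀ (pow_ne_zero _ (hζ.ne_zero hn))

section Jacobi

variable {R : Type*} [CommRing R]

/-- With `c p = k (p % m)` this is the paper's `A`: the periodic sign matrix `M` with its first
row and column deleted. -/
def jacobiMatrix (N : ℕ) (c : ℕ → R) : Matrix (Fin N) (Fin N) R :=
  of fun i j => if (j : ℕ) = i + 1 then 1 else if (i : ℕ) = j + 1 then c i else 0

/-- The eigen-equation of the semi-infinite `jacobiMatrix` in the shifted indexing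
`x i = Z (i + 1)`; `Z 0` stands for the deleted first coordinate. -/
def IsJacobiSolution (c : ℕ → R) (lam : R) (Z : ℕ → R) : Prop :=
  ∀ p, Z (p + 2) + c p * Z p = lam * Z (p + 1)

variable {c : ℕ → R} {lam : R} {X Y Z : ℕ → R}

lemma IsJacobiSolution.smul_add_smul (hX : IsJacobiSolution c lam X)
    (hY : IsJacobiSolution c lam Y) (s t : R) : IsJacobiSolution c lam (s • X + t • Y) := by
  intro p
  simp only [Pi.add_apply, Pi.smul_apply, smul_eq_mul]
  linear_combination s * hX p + t * hY p

lemma IsJacobiSolution.eq_zero (hZ : IsJacobiSolution c lam Z) (h0 : Z 0 = 0) (h1 : Z 1 = 0) :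
    Z = 0 := by
  have h : ∀ p, Z p = 0 ∧ Z (p + 1) = 0 := by
    intro p
    induction p with
    | zero => exact ⟨h0, h1⟩
    | succ p ih => exact ⟨ih.2, by linear_combination hZ p + lam * ih.2 - c p * ih.1⟩
  exact funext fun p => (h p).1

lemma isJacobiSolution_of_forall_lt {m : ℕ} (hm : 0 < m) {z : R} (hc : ∀ p, c (p + m) = c p)
    (hZ : ∀ p, Z (p + m) = z * Z p) (h : ∀ p < m, Z (p + 2) + c p * Z p = lam * Z (p + 1)) :
    IsJacobiSolution c lam Z := by
  intro p
  induction p using Nat.strong_induction_on with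
  | _ p ih =>
    by_cases hp : p < m
    · exact h p hp
    obtain ⟨q, rfl⟩ : ∃ q, p = q + m := ⟨p - m, by omega⟩
    rw [show q + m + 2 = q + 2 + m by ring, show q + m + 1 = q + 1 + m by ring, hZ, hZ, hZ, hc]
    linear_combination z * ih q (by omega)

lemma IsJacobiSolution.jacobiMatrix_mulVec {N : ℕ} (hZ : IsJacobiSolution c lam Z) (h0 : Z 0 = 0)
    (hN : Z (N + 1) = 0) :
    jacobiMatrix N c *ᵥ (fun i : Fin N => Z (i + 1)) = lam • fun i : Fin N => Z (i + 1) := by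
  ext ⟨i, hi⟩
  have hentry : ∀ j : ℕ, (if j = i + 1 then 1 else if i = j + 1 then c i else 0) =
      (if j = i + 1 then 1 else 0) + if i = j + 1 then c i else 0 := fun j => by
    split_ifs <;> first | omega | simp
  simp only [mulVec, dotProduct, jacobiMatrix, of_apply, Pi.smul_apply, smul_eq_mul]
  rw [Fin.sum_univ_eq_sum_range
    (fun j => (if j = i + 1 then 1 else if i = j + 1 then c i else 0) * Z (j + 1))]
  simp only [hentry, add_mul, ite_mul, one_mul, zero_mul, Finset.sum_add_distrib,
    Finset.sum_ite_eq', Finset.mem_range]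
  have hnext : (if i + 1 < N then Z (i + 1 + 1) else 0) = Z (i + 2) := by
    split_ifs with h
    · rfl
    · rw [show i + 2 = N + 1 by omega, hN]
  rw [hnext, ← hZ i]
  obtain _ | s := i
  · simp [h0]
  · simp [show s < N by omega]

end Jacobi

lemma apply_add_mul_eq_pow_mul {K : Type*} [Monoid K] {m : ℕ} {a : K} {X : ℕ → K}
    (hX : ∀ p, X (p + m) = a * X p) (p t : ℕ) : X (p + t * m) = a ^ t * X p := by
  induction t with
  | zero => simp
  | succ t ih => rw [Nat.succ_mul, ← add_assoc, hX, ih, pow_succ', mul_assoc]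

lemma exists_smul_add_smul_ne_zero {K : Type*} [Field K] {m : ℕ} {a b : K} {X Y : ℕ → K}
    (hX : X ≠ 0) (hY : Y ≠ 0) (hXa : ∀ p, X (p + m) = a * X p)
    (hYb : ∀ p, Y (p + m) = b * Y p) (hab : a ≠ b) :
    ∃ s t : K, s • X + t • Y ≠ 0 ∧ (s • X + t • Y) 0 = 0 := by
  by_cases hX0 : X 0 = 0
  · exact ⟨1, 0, by simpa using hX, by simp [hX0]⟩
  have hZ0 : (Y 0 • X + -X 0 • Y) 0 = 0 := by
    simp only [Pi.add_apply, Pi.smul_apply, smul_eq_mul]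
    ring
  refine ⟨Y 0, -X 0, fun hZ => hY ?_, hZ0⟩
  have hZ' : ∀ p, Y 0 * X p = X 0 * Y p := fun p => by
    have h := congrFun hZ p
    simp only [Pi.add_apply, Pi.smul_apply, smul_eq_mul, Pi.zero_apply] at h
    linear_combination h
  -- shifting the relation by `m` multiplies the two sides by `a` and `b`
  have hYX : ∀ p, Y 0 * X p = 0 := fun p => by
    have h := hZ' (p + m)
    rw [hXa, hYb] at h
    have : (a - b) * (Y 0 * X p) = 0 := by linear_combination h - b * hZ' p
    exact (mul_eq_zero.mp this).resolve_left (sub_ne_zero.mpr hab)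
  obtain ⟨p, hp⟩ := Function.ne_iff.mp hX
  have hY0 : Y 0 = 0 := (mul_eq_zero.mp (hYX p)).resolve_right hp
  exact funext fun q => by
    simpa [hY0, hX0] using (hZ' q).symm

lemma exists_jacobiMatrix_mulVec_eq_smul {K : Type*} [Field K] {c : ℕ → K} {lam a b : K}
    {m n : ℕ} {X Y : ℕ → K} (hnm : 2 ≤ n * m) (hX : IsJacobiSolution c lam X)
    (hY : IsJacobiSolution c lam Y) (hX0 : X ≠ 0) (hY0 : Y ≠ 0)
    (hXa : ∀ p, X (p + m) = a * X p) (hYb : ∀ p, Y (p + m) = b * Y p) (hab : a ≠ b)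
    (ha : a ^ n = 1) (hb : b ^ n = 1) :
    ∃ x ≠ 0, jacobiMatrix (n * m - 1) c *ᵥ x = lam • x := by
  obtain ⟨s, t, hZne, hZ0⟩ := exists_smul_add_smul_ne_zero hX0 hY0 hXa hYb hab
  set Z := s • X + t • Y
  have hZ : IsJacobiSolution c lam Z := hX.smul_add_smul hY s t
  have hZ1 : Z 1 ≠ 0 := fun h1 => hZne (hZ.eq_zero hZ0 h1)
  have hZnm : Z (n * m - 1 + 1) = 0 := by
    have hXn := apply_add_mul_eq_pow_mul hXa 0 n
    have hYn := apply_add_mul_eq_pow_mul hYb 0 n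
    rw [zero_add, ha, one_mul] at hXn
    rw [zero_add, hb, one_mul] at hYn
    simpa [Z, Nat.sub_add_cancel (by omega : 1 ≤ n * m), hXn, hYn] using hZ0
  exact ⟨_, fun hx => hZ1 (congrFun hx ⟨0, by omega⟩), hZ.jacobiMatrix_mulVec hZ0 hZnm⟩

section Bloch

variable {m : ℕ} [NeZero m]

def blochSeq (m : ℕ) [NeZero m] (z : ℂ) (v : Fin m → ℂ) (p : ℕ) : ℂ :=
  z ^ (p / m) * v (Fin.ofNat m p)

lemma blochSeq_val (z : ℂ) (v : Fin m → ℂ) (r : Fin m) : blochSeq m z v r = v r := by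
  simp [blochSeq, Nat.div_eq_of_lt r.isLt]

lemma blochSeq_add_period (z : ℂ) (v : Fin m → ℂ) (p : ℕ) :
    blochSeq m z v (p + m) = z * blochSeq m z v p := by
  rw [blochSeq, blochSeq, Nat.add_div_right _ (NeZero.pos m), pow_succ,
    show Fin.ofNat m (p + m) = Fin.ofNat m p by ext; simp]
  ring

lemma blochSeq_ne_zero (z : ℂ) {v : Fin m → ℂ} (hv : v ≠ 0) : blochSeq m z v ≠ 0 := by
  obtain ⟨r, hr⟩ := Function.ne_iff.mp hv
  exact Function.ne_iff.mpr ⟨r, by simpa [blochSeq_val] using hr⟩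

/-- The corner entries of the symbol are where the Bloch sequence wraps around,
`X (p + m) = e^{-iφ} X p`. -/
lemma symb_mulVec_apply (k : ℕ → ℂ) (φ : ℝ) (v : Fin m → ℂ) (r : Fin m) :
    (symb m k φ *ᵥ v) r = blochSeq m (exp (-φ * I)) v (r + 1) +
      if (r : ℕ) = 0 then k (m - 1) * exp (φ * I) * blochSeq m (exp (-φ * I)) v (m - 1)
      else k (r - 1) * blochSeq m (exp (-φ * I)) v (r - 1) := by
  have hv : v = fun c : Fin m => blochSeq m (exp (-φ * I)) v c := by
    ext c; exact (blochSeq_val _ v c).symm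
  set X := blochSeq m (exp (-φ * I)) v
  rw [hv]
  simp only [mulVec, dotProduct, symb, of_apply, add_mul, Finset.sum_add_distrib, ite_mul, zero_mul]
  rw [Fin.sum_univ_eq_sum_range (fun c => if c = (r : ℕ) + 1 then 1 * X c else 0),
    Fin.sum_univ_eq_sum_range (fun c => if (r : ℕ) = c + 1 then k c * X c else 0),
    Fin.sum_univ_eq_sum_range
      (fun c => if (r : ℕ) = 0 ∧ c = m - 1 then k c * exp (φ * I) * X c else 0),
    Fin.sum_univ_eq_sum_range
      (fun c => if (r : ℕ) = m - 1 ∧ c = 0 then exp (-φ * I) * X c else 0)]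
  have hXm : X m = exp (-φ * I) * X 0 := by
    simpa only [zero_add] using blochSeq_add_period (exp (-φ * I)) v 0
  have hm := NeZero.pos m
  obtain ⟨_ | s, hr⟩ := r
  · simp only [ite_and, Finset.sum_ite_irrel, Finset.sum_const_zero, Finset.sum_ite_eq',
      Finset.mem_range, one_mul, if_true]
    rcases (Nat.succ_le_of_lt hm).lt_or_eq with h1 | h1
    · simp [h1, hm.ne', (Nat.sub_ne_zero_of_lt h1).symm]
    · subst h1
      simp [hXm, add_comm]
  · simp only [ite_and, Finset.sum_ite_irrel, Finset.sum_const_zero, Finset.sum_ite_eq',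
      Finset.mem_range, one_mul, Nat.add_right_cancel_iff]
    rcases (Nat.succ_le_of_lt hr).lt_or_eq with h1 | h1
    · simp [h1, show s < m by omega, show s + 1 ≠ m - 1 by omega]
    · subst h1
      simp [hXm, show s < s + 1 + 1 by omega]
      ring

lemma isJacobiSolution_blochSeq (k : ℕ → ℂ) (φ : ℝ) {lam : ℂ} {v : Fin m → ℂ}
    (hv : symb m k φ *ᵥ v = lam • v) :
    IsJacobiSolution (fun p => k (p % m)) lam (blochSeq m (exp (-φ * I)) v) := by
  have hm := NeZero.pos m
  have hrow (r : Fin m) := (symb_mulVec_apply k φ v r).symm.trans (congrFun hv r)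
  refine isJacobiSolution_of_forall_lt hm (by simp) (blochSeq_add_period _ v) fun p hp => ?_
  rw [Nat.mod_eq_of_lt hp]
  rcases (Nat.succ_le_of_lt hp).lt_or_eq with hp1 | hp1
  · have h := hrow ⟨p + 1, hp1⟩
    simp only [Nat.add_eq_zero_iff, one_ne_zero, and_false, if_false, Nat.add_sub_cancel,
      Pi.smul_apply, smul_eq_mul, ← blochSeq_val (exp (-φ * I)) v] at h
    exact h
  · have h := hrow ⟨0, hm⟩
    simp only [if_true, Pi.smul_apply, smul_eq_mul, ← blochSeq_val (exp (-φ * I)) v,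
      show m - 1 = p by omega] at h
    have hexp : exp (-φ * I) * exp (φ * I) = 1 := by rw [← Complex.exp_add]; simp
    rw [show p + 2 = 1 + m by omega, show p + 1 = 0 + m by omega, blochSeq_add_period,
      blochSeq_add_period]
    linear_combination exp (-φ * I) * h - k p * blochSeq m (exp (-φ * I)) v p * hexp

end Bloch

lemma prod_range_mul_self_eq_one_s11 {m : ℕ} {k : ℕ → ℂ} (hk : ∀ i < m, k i = 1 ∨ k i = -1)
    {t : ℕ} (ht : t ≤ m) : (∏ i ∈ Finset.range t, k i) * ∏ i ∈ Finset.range t, k i = 1 := by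
  rw [← Finset.prod_mul_distrib]
  refine Finset.prod_eq_one fun i hi => ?_
  rcases hk i (by simp at hi; omega) with h | h <;> simp [h]

/-- The gauge `∏_{i<r} k i` trades each subdiagonal `k i` of the transpose for a `1` and each
superdiagonal `1` for a `k i`; `∏ k = 1` makes it consistent at the corners. -/
lemma symb_neg_eq_diagonal_mul_transpose_mul {m : ℕ} (k : ℕ → ℂ)
    (hk : ∀ i < m, k i = 1 ∨ k i = -1) (hprod : ∏ j ∈ Finset.range m, k j = 1) (φ : ℝ) :
    symb m k (-φ) = diagonal (fun r : Fin m => ∏ i ∈ Finset.range r, k i) * (symb m k φ)ᵀ *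
      diagonal (fun r : Fin m => ∏ i ∈ Finset.range r, k i) := by
  set d : ℕ → ℂ := fun r => ∏ i ∈ Finset.range r, k i
  have hk2 : ∀ i < m, k i * k i = 1 := fun i hi => by rcases hk i hi with h | h <;> simp [h]
  have hd2 : ∀ t ≤ m, d t * d t = 1 := fun t ht => prod_range_mul_self_eq_one_s11 hk ht
  have hsucc : ∀ t, d (t + 1) = d t * k t := fun t => Finset.prod_range_succ k t
  have hd0 : d 0 = 1 := Finset.prod_range_zero k
  have hlast : 0 < m → d (m - 1) = k (m - 1) := fun hm => by
    have h := hsucc (m - 1)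
    rw [Nat.sub_add_cancel hm, show d m = 1 from hprod] at h
    linear_combination -k (m - 1) * h - d (m - 1) * hk2 (m - 1) (by omega)
  ext r c
  have hr := r.isLt
  have hc := c.isLt
  simp only [mul_diagonal, diagonal_mul, transpose_apply, symb, of_apply]
  push_cast
  rw [neg_neg]
  change _ = d r * _ * d c
  have g1 : d r * (if (r : ℕ) = c + 1 then 1 else 0) * d c =
      if (r : ℕ) = c + 1 then k c else 0 := by
    split_ifs with h
    · rw [h, hsucc]; linear_combination k c * hd2 c hc.le
    · ring
  have g2 : d r * (if (c : ℕ) = r + 1 then k r else 0) * d c =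
      if (c : ℕ) = r + 1 then 1 else 0 := by
    split_ifs with h
    · rw [h, hsucc]; linear_combination (k r * k r) * hd2 r hr.le + hk2 r hr
    · ring
  have g3 : d r * (if (c : ℕ) = 0 ∧ (r : ℕ) = m - 1 then k r * exp (φ * I) else 0) * d c =
      if (r : ℕ) = m - 1 ∧ (c : ℕ) = 0 then exp (φ * I) else 0 := by
    by_cases h : (r : ℕ) = m - 1 ∧ (c : ℕ) = 0
    · rw [if_pos h.symm, if_pos h, h.1, h.2, hd0, hlast (by omega)]
      linear_combination exp (φ * I) * hk2 (m - 1) (by omega)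
    · rw [if_neg (mt And.symm h), if_neg h]; ring
  have g4 : d r * (if (c : ℕ) = m - 1 ∧ (r : ℕ) = 0 then exp (-φ * I) else 0) * d c =
      if (r : ℕ) = 0 ∧ (c : ℕ) = m - 1 then k c * exp (-φ * I) else 0 := by
    by_cases h : (r : ℕ) = 0 ∧ (c : ℕ) = m - 1
    · rw [if_pos h.symm, if_pos h, h.1, h.2, hd0, hlast (by omega)]; ring
    · rw [if_neg (mt And.symm h), if_neg h]; ring
  linear_combination -(g1 + g2 + g3 + g4)

lemma spectrum_symb_neg {m : ℕ} (k : ℕ → ℂ) (hk : ∀ i < m, k i = 1 ∨ k i = -1)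
    (hprod : ∏ j ∈ Finset.range m, k j = 1) (φ : ℝ) :
    spectrum ℂ (symb m k (-φ)) = spectrum ℂ (symb m k φ) := by
  set D := diagonal fun r : Fin m => ∏ i ∈ Finset.range r, k i
  have hDD : D * D = 1 := by
    rw [diagonal_mul_diagonal, ← diagonal_one]
    exact congrArg diagonal (funext fun r => prod_range_mul_self_eq_one_s11 hk r.isLt.le)
  rw [symb_neg_eq_diagonal_mul_transpose_mul k hk hprod, ← (symb m k φ).spectrum_transpose]
  exact spectrum.units_conjugate (u := ⟨D, D, hDD, hDD⟩)

lemma exp_two_pi_mul_div_mul_I (j n : ℕ) :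
    exp (((2 * Real.pi * j / n : ℝ) : ℂ) * I) = exp (2 * Real.pi * I / n) ^ j := by
  rw [← Complex.exp_nat_mul]
  congr 1
  push_cast
  ring

lemma exists_isJacobiSolution_of_mem_spectrum {m : ℕ} [NeZero m] {k : ℕ → ℂ} {φ : ℝ}
    {lam : ℂ} (h : lam ∈ spectrum ℂ (symb m k φ)) :
    ∃ X : ℕ → ℂ, X ≠ 0 ∧ IsJacobiSolution (fun p => k (p % m)) lam X ∧
      ∀ p, X (p + m) = exp (-φ * I) * X p := by
  obtain ⟨v, hv0, hv⟩ := Matrix.exists_mulVec_eq_smul_of_mem_spectrum h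
  exact ⟨_, blochSeq_ne_zero _ hv0, isJacobiSolution_blochSeq k φ hv, blochSeq_add_period _ v⟩

/-- If `∏ⱼ kⱼ = 1` and `n ≥ 3`, there is a tridiagonal matrix
`A ∈ ℂ^{(nm−1)×(nm−1)}` with zero diagonal and sub- and superdiagonal entries in `{±1}` such
that for every `j ∈ {1,…,n−1}` with `j ≠ n/2`, every eigenvalue of `a^k(2πj/n)` is an
eigenvalue of `A`. -/
theorem exists_sign_matrix_containing_symbol_eigenvalues
    (m : ℕ) (hm : 1 ≤ m) (k : ℕ → ℂ) (hk : ∀ i < m, k i = 1 ∨ k i = -1)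
    (hprod : ∏ j ∈ Finset.range m, k j = 1)
    (n : ℕ) (hn : 3 ≤ n) :
    ∃ A : Matrix (Fin (n * m - 1)) (Fin (n * m - 1)) ℂ,
      (∀ i j : Fin (n * m - 1),
        ((j : ℕ) = (i : ℕ) + 1 ∨ (i : ℕ) = (j : ℕ) + 1) → (A i j = 1 ∨ A i j = -1)) ∧
      (∀ i j : Fin (n * m - 1),
        ¬((j : ℕ) = (i : ℕ) + 1 ∨ (i : ℕ) = (j : ℕ) + 1) → A i j = 0) ∧
      ∀ j : ℕ, 1 ≤ j → j ≤ n - 1 → 2 * j ≠ n →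
        ∀ lam ∈ spectrum ℂ (symb m k (2 * Real.pi * j / n)),
          ∃ x : Fin (n * m - 1) → ℂ, x ≠ 0 ∧ A.mulVec x = lam • x := by
  have : NeZero m := ⟨by omega⟩
  refine ⟨jacobiMatrix (n * m - 1) fun p => k (p % m), fun i j hij => ?_, fun i j hij => ?_, ?_⟩
  · rcases hij with h | h
    · simp [jacobiMatrix, h]
    · rw [jacobiMatrix, of_apply, if_neg (by omega), if_pos h]
      exact hk _ (Nat.mod_lt _ (NeZero.pos m))
  · simp [jacobiMatrix, not_or.mp hij]
  intro j hj1 hjn h2j lam hlam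
  have hn0 : n ≠ 0 := by omega
  have hζ := Complex.isPrimitiveRoot_exp n hn0
  have hζj : (exp (2 * Real.pi * I / n) ^ j) ^ n = 1 := by
    rw [pow_right_comm, hζ.pow_eq_one, one_pow]
  obtain ⟨X, hX0, hX, hXa⟩ := exists_isJacobiSolution_of_mem_spectrum hlam
  obtain ⟨Y, hY0, hY, hYb⟩ := exists_isJacobiSolution_of_mem_spectrum
    (φ := -(2 * Real.pi * j / n)) (by rwa [spectrum_symb_neg k hk hprod])
  rw [neg_mul, Complex.exp_neg, exp_two_pi_mul_div_mul_I] at hXa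
  simp only [Complex.ofReal_neg, neg_neg, exp_two_pi_mul_div_mul_I] at hYb
  exact exists_jacobiMatrix_mulVec_eq_smul (by nlinarith) hX hY hX0 hY0 hXa hYb
    (hζ.pow_inv_ne_pow hn0 fun h => h2j (Nat.eq_of_dvd_of_lt_two_mul (by omega) h (by omega)))
    (by rw [inv_pow, hζj, inv_one]) hζj
end

section
/- Let p : ℂ → ℂ be a nonconstant polynomial. Then the set p⁻¹(2cos(πℚ \ πℤ)) = { λ ∈ ℂ : p(λ) = 2cos(πq) for some rational q that is not an integer } is dense in p⁻¹([−2,2]) = { λ ∈ ℂ : p(λ) ∈ [−2,2] }. -/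
open Complex

/-! Nonconstant complex polynomials are open maps, and an open continuous map pulls closures back
to closures: `p⁻¹(closure T) = closure (p⁻¹ T)`. It therefore suffices that `T = 2cos(π(ℚ \ ℤ))`
is dense in `[-2, 2]`, which holds because `t ↦ 2cos(πt)` is continuous, maps `ℝ` onto `[-2, 2]`,
and `ℚ \ ℤ` is dense in `ℝ`. -/

theorem Rat.dense_cast_setOf_den_ne_one : Dense (((↑) : ℚ → ℝ) '' {q | q.den ≠ 1}) := by
  have hdense : Dense (Set.range ((↑) : ℚ → ℝ) ∩ (Set.range ((↑) : ℤ → ℝ))ᶜ) :=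
    Rat.denseRange_cast.inter_of_isOpen_right ((Set.countable_range _).dense_compl ℝ)
      Real.isOpen_compl_range_intCast
  refine hdense.mono ?_
  rintro _ ⟨⟨q, rfl⟩, hq⟩
  refine ⟨q, fun hden => hq ⟨q.num, ?_⟩, rfl⟩
  exact_mod_cast Rat.coe_int_num_of_den_eq_one hden

theorem Icc_subset_closure_two_mul_cos_pi_rat :
    Set.Icc (-2 : ℝ) 2 ⊆
      closure ((fun q : ℚ => 2 * Real.cos (Real.pi * q)) '' {q | q.den ≠ 1}) := by
  set f : ℝ → ℝ := fun t => 2 * Real.cos (Real.pi * t)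
  have hf : Continuous f := by fun_prop
  have hsurj : Set.Icc (-2 : ℝ) 2 ⊆ f '' Set.Icc 0 1 := by
    simpa [f] using intermediate_value_Icc' zero_le_one hf.continuousOn
  calc Set.Icc (-2 : ℝ) 2 ⊆ f '' closure (((↑) : ℚ → ℝ) '' {q | q.den ≠ 1}) := by
        rw [Rat.dense_cast_setOf_den_ne_one.closure_eq]
        exact hsurj.trans (Set.image_mono (Set.subset_univ _))
    _ ⊆ closure (f '' (((↑) : ℚ → ℝ) '' {q | q.den ≠ 1})) := image_closure_subset_closure_image hf
    _ = _ := by rw [Set.image_image]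

/-- For a nonconstant polynomial `p : ℂ → ℂ`, the set
`p⁻¹(2cos(πℚ \ πℤ)) = {λ : p(λ) = 2cos(πq), q ∈ ℚ \ ℤ}` is contained and dense in
`p⁻¹([−2,2]) = {λ : p(λ) ∈ [−2,2]}`. -/
theorem preimage_cos_rational_dense (p : Polynomial ℂ) (hp : 0 < p.natDegree) :
    {lam : ℂ | ∃ q : ℚ, q.den ≠ 1 ∧ p.eval lam = ((2 * Real.cos (Real.pi * q) : ℝ) : ℂ)} ⊆
      {lam : ℂ | ∃ x ∈ Set.Icc (-2 : ℝ) 2, p.eval lam = (x : ℂ)} ∧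
    {lam : ℂ | ∃ x ∈ Set.Icc (-2 : ℝ) 2, p.eval lam = (x : ℂ)} ⊆
      closure {lam : ℂ | ∃ q : ℚ, q.den ≠ 1 ∧
        p.eval lam = ((2 * Real.cos (Real.pi * q) : ℝ) : ℂ)} := by
  set T := (fun q : ℚ => 2 * Real.cos (Real.pi * q)) '' {q | q.den ≠ 1}
  refine ⟨?_, ?_⟩
  · rintro lam ⟨q, hq, hlam⟩
    refine ⟨_, ⟨?_, ?_⟩, hlam⟩ <;>
      linarith [Real.neg_one_le_cos (Real.pi * q), Real.cos_le_one (Real.pi * q)]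
  have hT : ofReal '' Set.Icc (-2) 2 ⊆ closure (ofReal '' T) :=
    (Set.image_mono Icc_subset_closure_two_mul_cos_pi_rat).trans
      (image_closure_subset_closure_image continuous_ofReal)
  have hpull : p.eval ⁻¹' closure (ofReal '' T) = closure (p.eval ⁻¹' (ofReal '' T)) :=
    (p.isOpenQuotientMap_eval hp.ne').isOpenMap.preimage_closure_eq_closure_preimage
      p.continuous _
  rintro lam ⟨x, hx, hlam⟩
  have hmem : lam ∈ closure (p.eval ⁻¹' (ofReal '' T)) := hpull ▸ hT ⟨x, hx, hlam.symm⟩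
  refine closure_mono ?_ hmem
  rintro μ ⟨_, ⟨q, hq, rfl⟩, hμ⟩
  exact ⟨q, hq, hμ.symm⟩
end

section
/- Let m ≥ 1, k ∈ {±1}^m with ∏_{j=1}^m k_j = 1, and let p be the degree-m polynomial with det(a^k(φ) − λI_m) = (−1)^m(p(λ) − 2cos φ). Then the set S = ⋃_{n ∈ ℕ} ⋃_{j ∈ {1,…,n−1}, j ≠ n/2} spec(a^k(2πj/n)) equals p⁻¹(2cos(π(ℚ\ℤ))) and is dense in p⁻¹([−2,2]). -/
/-!
By the determinant identity, `λ ∈ spec a^k(φ)` exactly when `p(λ) = 2 cos φ`. The angles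
`2πj/n` with `0 < j < n`, `2j ≠ n` are `π` times the rationals in `(0, 2) \ {1}`, and these
represent every non-integer rational modulo `2`, which gives the description of `S`.
The non-integer rationals are dense in `ℝ`, so `2 cos(π(ℚ \ ℤ))` is dense in `[-2, 2]`; since a
non-constant polynomial is an open map of `ℂ`, taking preimages under `p` commutes with
taking closures, and the density of `S` in `p⁻¹([-2, 2])` follows.
-/

open Complex Matrix

open Real

theorem Matrix.mem_spectrum_iff_det_sub_smul_one_eq_zero {n K : Type*} [Fintype n]
    [DecidableEq n] [Field K] (A : Matrix n n K) (lam : K) :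
    lam ∈ spectrum K A ↔ (A - lam • 1).det = 0 := by
  rw [spectrum.mem_iff, Matrix.isUnit_iff_isUnit_det, isUnit_iff_ne_zero, not_not,
    Algebra.algebraMap_eq_smul_one, ← neg_sub, det_neg]
  simp

theorem mem_spectrum_symb_iff {m : ℕ} {k : ℕ → ℂ} {p : Polynomial ℂ}
    (hdet : ∀ (φ : ℝ) (lam : ℂ),
      (symb m k φ - lam • 1).det = (-1) ^ m * (p.eval lam - 2 * Real.cos φ))
    (φ : ℝ) (lam : ℂ) :
    lam ∈ spectrum ℂ (symb m k φ) ↔ p.eval lam = ((2 * Real.cos φ : ℝ) : ℂ) := by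
  rw [mem_spectrum_iff_det_sub_smul_one_eq_zero, hdet]
  simp [sub_eq_zero]

theorem Rat.den_ne_one_iff {q : ℚ} : q.den ≠ 1 ↔ q ∉ Set.range ((↑) : ℤ → ℚ) := by
  rw [not_iff_not, Rat.den_eq_one_iff]
  exact ⟨fun h => ⟨_, h⟩, fun ⟨z, hz⟩ => hz ▸ by simp⟩

theorem Rat.exists_nat_div_eq_of_pos_of_lt_one {r : ℚ} (h0 : 0 < r) (h1 : r < 1) :
    ∃ n j : ℕ, 0 < j ∧ j < n ∧ r = j / n := by
  have hnum : 0 < r.num := Rat.num_pos.2 h0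
  have hlt : r.num < r.den := Rat.num_lt_denom_iff.2 h1
  refine ⟨r.den, r.num.toNat, by omega, by omega, ?_⟩
  rw [← Int.cast_natCast, Int.toNat_of_nonneg hnum.le, Rat.num_div_den]

theorem exists_rat_cos_eq_cos_two_pi_div {n j : ℕ} (hj : 1 ≤ j) (hjn : j ≤ n - 1)
    (hn : 2 * j ≠ n) : ∃ q : ℚ, q.den ≠ 1 ∧ Real.cos (π * q) = Real.cos (2 * π * j / n) := by
  refine ⟨(2 * j : ℕ) / (n : ℚ), fun hden => ?_, by push_cast; ring_nf⟩
  obtain ⟨c, hc⟩ := (Rat.den_div_natCast_eq_one_iff (2 * j) n (by omega)).1 hden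
  rcases c with _ | _ | c
  · omega
  · omega
  · have : n * 2 ≤ n * (c + 1 + 1) := Nat.mul_le_mul_left n (by omega)
    omega

theorem exists_nat_cos_two_pi_div_eq_cos {q : ℚ} (hq : q.den ≠ 1) :
    ∃ n j : ℕ, 1 ≤ j ∧ j ≤ n - 1 ∧ 2 * j ≠ n ∧ Real.cos (2 * π * j / n) = Real.cos (π * q) := by
  rw [Rat.den_ne_one_iff] at hq
  -- `j / n := fract (q / 2)` lies in `(0, 1) \ {1/2}`, and `2π j / n ≡ π q` modulo `2π`.
  have hfract : Int.fract (q / 2) ≠ 0 := fun h =>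
    hq ⟨2 * ⌊q / 2⌋, by push_cast; linarith [Int.self_sub_floor (q / 2)]⟩
  obtain ⟨n, j, hj, hjn, hr⟩ := Rat.exists_nat_div_eq_of_pos_of_lt_one
    ((Int.fract_nonneg _).lt_of_ne' hfract) (Int.fract_lt_one _)
  refine ⟨n, j, hj, by omega, fun h2 => hq ⟨2 * ⌊q / 2⌋ + 1, ?_⟩, ?_⟩
  · have hhalf : Int.fract (q / 2) = 1 / 2 := by
      rw [hr, ← h2]; push_cast; field_simp
    push_cast; linarith [Int.self_sub_floor (q / 2)]
  · have hr' := congrArg ((↑) : ℚ → ℝ) (hr.symm.trans (Int.self_sub_floor (q / 2)).symm)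
    push_cast at hr'
    have hangle : (2 * π * j / n : ℝ) = π * q - ⌊q / 2⌋ * (2 * π) := by
      rw [mul_div_assoc, hr']; ring
    rw [hangle, Real.cos_sub_int_mul_two_pi]

theorem dense_rat_den_ne_one : Dense ((↑) '' {q : ℚ | q.den ≠ 1} : Set ℝ) := by
  refine (((Set.countable_range _).dense_compl ℝ).inter_of_isOpen_left Rat.denseRange_cast
    Real.isOpen_compl_range_intCast).mono ?_
  rintro _ ⟨hint, q, rfl⟩
  refine ⟨q, Rat.den_ne_one_iff.2 ?_, rfl⟩
  rintro ⟨z, rfl⟩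
  exact hint ⟨z, by simp⟩

theorem Icc_subset_closure_two_cos_pi_rat :
    ((↑) '' Set.Icc (-2 : ℝ) 2 : Set ℂ) ⊆
      closure {c : ℂ | ∃ q : ℚ, q.den ≠ 1 ∧ c = ((2 * Real.cos (π * q) : ℝ) : ℂ)} := by
  set f : ℝ → ℂ := fun t => ((2 * Real.cos (π * t) : ℝ) : ℂ)
  have hrange : Set.range f ⊆ closure (f '' ((↑) '' {q : ℚ | q.den ≠ 1})) :=
    (by fun_prop : Continuous f).range_subset_closure_image_dense dense_rat_den_ne_one
  rintro _ ⟨x, hx, rfl⟩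
  refine closure_mono ?_ (hrange ⟨arccos (x / 2) / π, ?_⟩)
  · rintro _ ⟨_, ⟨q, hq, rfl⟩, rfl⟩
    exact ⟨q, hq, rfl⟩
  · simp only [f, mul_div_cancel₀ _ pi_ne_zero]
    rw [Real.cos_arccos (by linarith [hx.1]) (by linarith [hx.2])]
    push_cast; ring

theorem eigenvalues_at_roots_of_unity_dense_general
    (m : ℕ) (hm : 1 ≤ m) (k : ℕ → ℂ)
    (p : Polynomial ℂ) (hpdeg : p.natDegree = m)
    (hdet : ∀ (φ : ℝ) (lam : ℂ),
      (symb m k φ - lam • 1).det = (-1) ^ m * (p.eval lam - 2 * Real.cos φ)) :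
    {lam : ℂ | ∃ n j : ℕ, 1 ≤ j ∧ j ≤ n - 1 ∧ 2 * j ≠ n ∧
        lam ∈ spectrum ℂ (symb m k (2 * Real.pi * j / n))} =
      {lam : ℂ | ∃ q : ℚ, q.den ≠ 1 ∧ p.eval lam = ((2 * Real.cos (Real.pi * q) : ℝ) : ℂ)} ∧
    {lam : ℂ | ∃ x ∈ Set.Icc (-2 : ℝ) 2, p.eval lam = (x : ℂ)} ⊆
      closure {lam : ℂ | ∃ n j : ℕ, 1 ≤ j ∧ j ≤ n - 1 ∧ 2 * j ≠ n ∧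
        lam ∈ spectrum ℂ (symb m k (2 * Real.pi * j / n))} := by
  have hS : {lam : ℂ | ∃ n j : ℕ, 1 ≤ j ∧ j ≤ n - 1 ∧ 2 * j ≠ n ∧
        lam ∈ spectrum ℂ (symb m k (2 * Real.pi * j / n))} =
      p.eval ⁻¹' {c : ℂ | ∃ q : ℚ, q.den ≠ 1 ∧ c = ((2 * Real.cos (π * q) : ℝ) : ℂ)} := by
    ext lam
    simp only [Set.mem_ofPred_eq, Set.mem_preimage, mem_spectrum_symb_iff hdet]
    constructor
    · rintro ⟨n, j, hj, hjn, hn, hlam⟩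
      obtain ⟨q, hq, hcos⟩ := exists_rat_cos_eq_cos_two_pi_div hj hjn hn
      exact ⟨q, hq, by rw [hlam, hcos]⟩
    · rintro ⟨q, hq, hlam⟩
      obtain ⟨n, j, hj, hjn, hn, hcos⟩ := exists_nat_cos_two_pi_div_eq_cos hq
      exact ⟨n, j, hj, hjn, hn, by rw [hlam, hcos]⟩
  refine ⟨hS, ?_⟩
  rw [hS, ← (p.isOpenQuotientMap_eval (by omega)).isOpenMap.preimage_closure_eq_closure_preimage
    p.continuous]
  rintro lam ⟨x, hx, hlam⟩
  exact Icc_subset_closure_two_cos_pi_rat ⟨x, hx, hlam.symm⟩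

/-- With `p` the degree-`m` polynomial with
`det(a^k(φ) − λI) = (−1)^m (p(λ) − 2cos φ)` (which exists when `∏ⱼ kⱼ = 1`), the set
`S = ⋃ₙ ⋃_{1 ≤ j ≤ n−1, j ≠ n/2} spec(a^k(2πj/n))` equals `p⁻¹(2cos(π(ℚ\ℤ)))` and is
dense in `p⁻¹([−2,2])`. -/
theorem eigenvalues_at_roots_of_unity_dense
    (m : ℕ) (hm : 1 ≤ m) (k : ℕ → ℂ) (hk : ∀ i < m, k i = 1 ∨ k i = -1)
    (hprod : ∏ j ∈ Finset.range m, k j = 1)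
    (p : Polynomial ℂ) (hpdeg : p.natDegree = m)
    (hdet : ∀ (φ : ℝ) (lam : ℂ),
      (symb m k φ - lam • 1).det = (-1) ^ m * (p.eval lam - 2 * Real.cos φ)) :
    {lam : ℂ | ∃ n j : ℕ, 1 ≤ j ∧ j ≤ n - 1 ∧ 2 * j ≠ n ∧
        lam ∈ spectrum ℂ (symb m k (2 * Real.pi * j / n))} =
      {lam : ℂ | ∃ q : ℚ, q.den ≠ 1 ∧ p.eval lam = ((2 * Real.cos (Real.pi * q) : ℝ) : ℂ)} ∧
    {lam : ℂ | ∃ x ∈ Set.Icc (-2 : ℝ) 2, p.eval lam = (x : ℂ)} ⊆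
      closure {lam : ℂ | ∃ n j : ℕ, 1 ≤ j ∧ j ≤ n - 1 ∧ 2 * j ≠ n ∧
        lam ∈ spectrum ℂ (symb m k (2 * Real.pi * j / n))} :=
  eigenvalues_at_roots_of_unity_dense_general m hm k p hpdeg hdet
end

section
/- Let m ≥ 1 and k ∈ {±1}^m. Define k' ∈ {±1}^{2m} by k'_j = k_j and k'_{m+j} = k_j for 1 ≤ j ≤ m. Then ∏_{j=1}^{2m} k'_j = 1, and the 2m-periodic tridiagonal sign operator determined by k' equals the m-periodic tridiagonal sign operator determined by k; in particular, the union over φ ∈ [0,2π) of the zero sets of det(a^{k'}(φ) − λ I_{2m}) equals the union over ψ ∈ [0,2π) of the zero sets of det(a^k(ψ) − λ I_m). -/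
open Complex Matrix

namespace PeriodDoubling

/-- tridiagonal core minus `lam • 1` -/
noncomputable def Am (m : ℕ) (k : ℕ → ℂ) (lam : ℂ) : Matrix (Fin m) (Fin m) ℂ :=
  Matrix.of fun r c =>
    ((if (c : ℕ) = (r : ℕ) + 1 then 1 else 0) +
     (if (r : ℕ) = (c : ℕ) + 1 then k c else 0)) -
    (if r = c then lam else 0)

/-- corner part of the symbol -/
noncomputable def Sm (m : ℕ) (k : ℕ → ℂ) (ψ : ℝ) : Matrix (Fin m) (Fin m) ℂ :=
  Matrix.of fun r c =>
    (if (r : ℕ) = 0 ∧ (c : ℕ) = m - 1 then k (m - 1) * Complex.exp (ψ * Complex.I) else 0) +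
    (if (r : ℕ) = m - 1 ∧ (c : ℕ) = 0 then Complex.exp (-ψ * Complex.I) else 0)

lemma symb_sub_eq (m : ℕ) (k : ℕ → ℂ) (ψ : ℝ) (lam : ℂ) :
    symb m k ψ - lam • 1 = Am m k lam + Sm m k ψ := by
  ext r c
  have hcorner : (if (r : ℕ) = 0 ∧ (c : ℕ) = m - 1 then k (c : ℕ) * Complex.exp (ψ * Complex.I) else 0)
      = (if (r : ℕ) = 0 ∧ (c : ℕ) = m - 1 then k (m - 1) * Complex.exp (ψ * Complex.I) else 0) := by
    split_ifs with h
    · rw [h.2]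
    · rfl
  simp only [symb, Am, Sm, Matrix.sub_apply, Matrix.add_apply, Matrix.of_apply,
    Matrix.smul_apply, Matrix.one_apply, smul_eq_mul, mul_ite, mul_one, mul_zero, hcorner]
  ring

/-- off-diagonal block B -/
noncomputable def Bm (m : ℕ) (k : ℕ → ℂ) (φ : ℝ) : Matrix (Fin m) (Fin m) ℂ :=
  Matrix.of fun r c =>
    (if (r : ℕ) = 0 ∧ (c : ℕ) = m - 1 then k (m - 1) * Complex.exp (φ * Complex.I) else 0) +
    (if (r : ℕ) = m - 1 ∧ (c : ℕ) = 0 then 1 else 0)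

/-- off-diagonal block C -/
noncomputable def Cm (m : ℕ) (k : ℕ → ℂ) (φ : ℝ) : Matrix (Fin m) (Fin m) ℂ :=
  Matrix.of fun r c =>
    (if (r : ℕ) = 0 ∧ (c : ℕ) = m - 1 then k (m - 1) else 0) +
    (if (r : ℕ) = m - 1 ∧ (c : ℕ) = 0 then Complex.exp (-φ * Complex.I) else 0)

noncomputable def eqv (m : ℕ) : (Fin m ⊕ Fin m) ≃ Fin (2 * m) :=
  finSumFinEquiv.trans (finCongr (two_mul m).symm)

lemma coe_eqv_inl (m : ℕ) (i : Fin m) : ((eqv m (Sum.inl i) : Fin (2 * m)) : ℕ) = (i : ℕ) := by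
  simp [eqv]

lemma coe_eqv_inr (m : ℕ) (i : Fin m) : ((eqv m (Sum.inr i) : Fin (2 * m)) : ℕ) = m + (i : ℕ) := by
  simp [eqv]
  omega

lemma block_eq (m : ℕ) (hm : 1 ≤ m) (k k' : ℕ → ℂ) (hk' : ∀ j, k' j = k (j % m))
    (φ : ℝ) (lam : ℂ) :
    (Matrix.reindex (eqv m).symm (eqv m).symm) (symb (2 * m) k' φ - lam • 1)
      = fromBlocks (Am m k lam) (Bm m k φ) (Cm m k φ) (Am m k lam) := by
  ext i j
  have key : ∀ a b : Fin (2 * m),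
      (symb (2 * m) k' φ - lam • 1) a b =
        (if (b : ℕ) = (a : ℕ) + 1 then 1 else 0) +
        (if (a : ℕ) = (b : ℕ) + 1 then k' (b : ℕ) else 0) +
        (if (a : ℕ) = 0 ∧ (b : ℕ) = 2 * m - 1 then k' (b : ℕ) * Complex.exp (φ * Complex.I) else 0) +
        (if (a : ℕ) = 2 * m - 1 ∧ (b : ℕ) = 0 then Complex.exp (-φ * Complex.I) else 0) -
        (if (a : ℕ) = (b : ℕ) then lam else 0) := by
    intro a b
    simp only [symb, Matrix.sub_apply, Matrix.of_apply, Matrix.smul_apply, Matrix.one_apply,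
      smul_eq_mul, mul_ite, mul_one, mul_zero, Fin.ext_iff]
  simp only [Matrix.reindex_apply, Matrix.submatrix_apply, Equiv.symm_symm]
  rcases i with i | i <;> rcases j with j | j <;>
    rw [key] <;>
    simp only [coe_eqv_inl, coe_eqv_inr]
  · -- inl inl : Am
    have h1 : ¬((i : ℕ) = 0 ∧ (j : ℕ) = 2 * m - 1) := by have := j.isLt; omega
    have h2 : ¬((i : ℕ) = 2 * m - 1 ∧ (j : ℕ) = 0) := by have := i.isLt; omega
    rw [if_neg h1, if_neg h2]
    simp only [Matrix.fromBlocks_apply₁₁, Am, Matrix.of_apply, hk',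
      Nat.mod_eq_of_lt j.isLt, Fin.ext_iff]
    ring
  · -- inl inr : Bm
    have hi := i.isLt; have hj := j.isLt
    have h1 : ¬((i : ℕ) = (m + (j : ℕ)) + 1) := by omega
    have h2 : ¬((i : ℕ) = 2 * m - 1 ∧ (m + (j : ℕ)) = 0) := by omega
    have h3 : ¬((i : ℕ) = m + (j : ℕ)) := by omega
    rw [if_neg h1, if_neg h2, if_neg h3]
    have h4 : (m + (j : ℕ) = (i : ℕ) + 1) ↔ ((i : ℕ) = m - 1 ∧ (j : ℕ) = 0) := by omega
    have h5 : ((i : ℕ) = 0 ∧ m + (j : ℕ) = 2 * m - 1) ↔ ((i : ℕ) = 0 ∧ (j : ℕ) = m - 1) := by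
      omega
    simp only [h4, h5, Matrix.fromBlocks_apply₁₂, Bm, Matrix.of_apply]
    have h6 : (if (i : ℕ) = 0 ∧ (j : ℕ) = m - 1 then k' (m + (j : ℕ)) * Complex.exp (φ * Complex.I) else 0)
        = (if (i : ℕ) = 0 ∧ (j : ℕ) = m - 1 then k (m - 1) * Complex.exp (φ * Complex.I) else 0) := by
      split_ifs with h
      · rw [hk', h.2, Nat.add_mod_left, Nat.mod_eq_of_lt (by omega)]
      · rfl
    rw [h6]; ring
  · -- inr inl : Cm
    have hi := i.isLt; have hj := j.isLt
    have h1 : ¬((j : ℕ) = (m + (i : ℕ)) + 1) := by omega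
    have h2 : ¬((m + (i : ℕ)) = 0 ∧ (j : ℕ) = 2 * m - 1) := by omega
    have h3 : ¬((m + (i : ℕ)) = (j : ℕ)) := by omega
    rw [if_neg h1, if_neg h2, if_neg h3]
    have h4 : (m + (i : ℕ) = (j : ℕ) + 1) ↔ ((i : ℕ) = 0 ∧ (j : ℕ) = m - 1) := by omega
    have h5 : ((m + (i : ℕ)) = 2 * m - 1 ∧ (j : ℕ) = 0) ↔ ((i : ℕ) = m - 1 ∧ (j : ℕ) = 0) := by
      omega
    simp only [h4, h5, Matrix.fromBlocks_apply₂₁, Cm, Matrix.of_apply]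
    have h6 : (if (i : ℕ) = 0 ∧ (j : ℕ) = m - 1 then k' (j : ℕ) else 0)
        = (if (i : ℕ) = 0 ∧ (j : ℕ) = m - 1 then k (m - 1) else 0) := by
      split_ifs with h
      · rw [hk', h.2, Nat.mod_eq_of_lt (by omega)]
      · rfl
    rw [h6]; ring
  · -- inr inr : Am
    have hi := i.isLt; have hj := j.isLt
    have h1 : ¬((m + (i : ℕ)) = 0 ∧ (m + (j : ℕ)) = 2 * m - 1) := by omega
    have h2 : ¬((m + (i : ℕ)) = 2 * m - 1 ∧ (m + (j : ℕ)) = 0) := by omega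
    rw [if_neg h1, if_neg h2]
    have h3 : (m + (j : ℕ) = (m + (i : ℕ)) + 1) ↔ ((j : ℕ) = (i : ℕ) + 1) := by omega
    have h4 : ((m + (i : ℕ)) = (m + (j : ℕ)) + 1) ↔ ((i : ℕ) = (j : ℕ) + 1) := by omega
    have h5 : ((m + (i : ℕ)) = (m + (j : ℕ))) ↔ ((i : ℕ) = (j : ℕ)) := by omega
    simp only [h3, h4, h5, Matrix.fromBlocks_apply₂₂, Am, Matrix.of_apply, Fin.ext_iff]
    have h6 : (if (i : ℕ) = (j : ℕ) + 1 then k' (m + (j : ℕ)) else 0)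
        = (if (i : ℕ) = (j : ℕ) + 1 then k (j : ℕ) else 0) := by
      split_ifs with h
      · rw [hk', Nat.add_mod_left, Nat.mod_eq_of_lt hj]
      · rfl
    rw [h6]; ring

lemma Sm_add_pi (m : ℕ) (k : ℕ → ℂ) (ψ : ℝ) : Sm m k (ψ + Real.pi) = - Sm m k ψ := by
  have h1 : Complex.exp ((↑(ψ + Real.pi)) * Complex.I) = -Complex.exp (ψ * Complex.I) := by
    push_cast
    rw [add_mul, Complex.exp_add, Complex.exp_pi_mul_I]
    ring
  have hpi : Complex.exp ((-(Real.pi : ℂ)) * Complex.I) = -1 := by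
    rw [neg_mul, Complex.exp_neg, Complex.exp_pi_mul_I]
    norm_num
  have h2 : Complex.exp ((-↑(ψ + Real.pi)) * Complex.I) = -Complex.exp (-ψ * Complex.I) := by
    push_cast
    rw [show (-((ψ : ℂ) + Real.pi)) * Complex.I
        = (-(ψ : ℂ)) * Complex.I + (-(Real.pi : ℂ)) * Complex.I by ring,
      Complex.exp_add, hpi]
    ring
  ext r c
  simp only [Sm, Matrix.of_apply, Matrix.neg_apply, h1, h2]
  split_ifs <;> ring

lemma det_factor (m : ℕ) (hm : 1 ≤ m) (k k' : ℕ → ℂ) (hk' : ∀ j, k' j = k (j % m))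
    (φ : ℝ) (lam : ℂ) :
    (symb (2 * m) k' φ - lam • 1).det
      = (symb m k (φ / 2) - lam • 1).det * (symb m k (φ / 2 + Real.pi) - lam • 1).det := by
  set ω : ℂ := Complex.exp ((φ / 2 : ℝ) * Complex.I) with hωdef
  have hω : ω ≠ 0 := Complex.exp_ne_zero _
  set A := Am m k lam with hA
  set S := Sm m k (φ / 2) with hS
  -- step 1: reindex
  have h1 : (symb (2 * m) k' φ - lam • 1).det
      = (fromBlocks A (Bm m k φ) (Cm m k φ) A).det := by
    rw [← block_eq m hm k k' hk' φ lam, Matrix.det_reindex_self]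
  -- exp facts
  have hω2 : ω * ω = Complex.exp (φ * Complex.I) := by
    rw [hωdef, ← Complex.exp_add]
    congr 1
    push_cast
    ring
  have hωinv : ω * Complex.exp (-(↑(φ / 2) : ℂ) * Complex.I) = 1 := by
    rw [hωdef, ← Complex.exp_add, show ((↑(φ/2) : ℂ) * Complex.I + (-(↑(φ/2) : ℂ)) * Complex.I) = 0 by ring,
      Complex.exp_zero]
  have hωC : ω * Complex.exp (-(φ : ℂ) * Complex.I) = Complex.exp (-(↑(φ / 2) : ℂ) * Complex.I) := by
    rw [hωdef, ← Complex.exp_add]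
    congr 1
    push_cast
    ring
  -- step 2: B = ω • S and ω • C = S
  have hB : Bm m k φ = ω • S := by
    ext r c
    simp only [Bm, hS, Sm, Matrix.of_apply, Matrix.smul_apply, smul_eq_mul, mul_add, mul_ite,
      mul_zero]
    congr 1
    · split_ifs with h
      · rw [← hωdef, ← hω2]; ring
      · rfl
    · split_ifs with h
      · exact hωinv.symm
      · rfl
  have hC : ω • Cm m k φ = S := by
    ext r c
    simp only [Cm, hS, Sm, Matrix.of_apply, Matrix.smul_apply, smul_eq_mul, mul_add, mul_ite,
      mul_zero]
    congr 1
    · split_ifs with h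
      · rw [← hωdef]; ring
      · rfl
    · split_ifs with h
      · exact hωC
      · rfl
  -- step 3: conjugation by D = fromBlocks 1 0 0 (ω • 1)
  have hD : fromBlocks (1 : Matrix (Fin m) (Fin m) ℂ) 0 0 (ω • 1)
        * fromBlocks A (Bm m k φ) (Cm m k φ) A
      = fromBlocks A S S A * fromBlocks (1 : Matrix (Fin m) (Fin m) ℂ) 0 0 (ω • 1) := by
    rw [fromBlocks_multiply, fromBlocks_multiply]
    simp only [Matrix.one_mul, Matrix.mul_one, Matrix.zero_mul, Matrix.mul_zero,
      Matrix.smul_mul, Matrix.mul_smul, Matrix.one_mul, smul_zero, add_zero, zero_add, hB, hC]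
  have hdetD : (fromBlocks (1 : Matrix (Fin m) (Fin m) ℂ) (0 : Matrix (Fin m) (Fin m) ℂ)
      (0 : Matrix (Fin m) (Fin m) ℂ) (ω • (1 : Matrix (Fin m) (Fin m) ℂ))).det = ω ^ m := by
    rw [Matrix.det_fromBlocks_zero₂₁, Matrix.det_one, one_mul, Matrix.det_smul, Matrix.det_one,
      mul_one, Fintype.card_fin]
  have h2 : (fromBlocks A (Bm m k φ) (Cm m k φ) A).det = (fromBlocks A S S A).det := by
    have hd := congrArg Matrix.det hD
    rw [Matrix.det_mul, Matrix.det_mul, hdetD] at hd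
    have hωm : ω ^ m ≠ 0 := pow_ne_zero _ hω
    apply mul_left_cancel₀ hωm
    rw [hd]
    exact mul_comm _ _
  -- step 4: conjugation by Q
  set Q := fromBlocks (1 : Matrix (Fin m) (Fin m) ℂ) (1 : Matrix (Fin m) (Fin m) ℂ)
    (1 : Matrix (Fin m) (Fin m) ℂ) (-(1 : Matrix (Fin m) (Fin m) ℂ)) with hQdef
  have hQQ : Q * Q = (2 : ℂ) • 1 := by
    rw [hQdef, fromBlocks_multiply]
    ext i j
    rcases i with i | i <;> rcases j with j | j <;>
      simp [Matrix.one_apply] <;> try (split_ifs <;> norm_num)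
  have hdetQ : Q.det ≠ 0 := by
    intro h0
    have h := congrArg Matrix.det hQQ
    rw [Matrix.det_mul, h0, mul_zero, Matrix.det_smul, Matrix.det_one, mul_one] at h
    exact (pow_ne_zero _ (two_ne_zero)) h.symm
  have hQ : Q * fromBlocks A S S A = fromBlocks (A + S) 0 0 (A - S) * Q := by
    rw [hQdef, fromBlocks_multiply, fromBlocks_multiply]
    ext i j
    rcases i with i | i <;> rcases j with j | j <;>
      simp [Matrix.add_apply, Matrix.neg_apply, Matrix.sub_apply] <;> ring
  have h3 : (fromBlocks A S S A).det = (A + S).det * (A - S).det := by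
    have hd := congrArg Matrix.det hQ
    rw [Matrix.det_mul, Matrix.det_mul, Matrix.det_fromBlocks_zero₂₁] at hd
    apply mul_left_cancel₀ hdetQ
    rw [hd]
    exact mul_comm _ _
  have hAS1 : A + S = symb m k (φ / 2) - lam • 1 := (symb_sub_eq m k (φ / 2) lam).symm
  have hAS2 : A - S = symb m k (φ / 2 + Real.pi) - lam • 1 := by
    rw [symb_sub_eq, Sm_add_pi, hA, hS, sub_eq_add_neg]
  rw [h1, h2, h3, hAS1, hAS2]

end PeriodDoubling

/-- Doubling the period: with `k' ∈ {±1}^{2m}` defined by `k'_j = k_{j mod m}`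
(i.e. `k'_j = k_j` and `k'_{m+j} = k_j`), one has `∏_{j=1}^{2m} k'_j = 1`; the `2m`-periodic
extension of `k'` equals the `m`-periodic extension of `k` (so the associated periodic
tridiagonal sign operators coincide); and the union over `φ` of the zero sets of
`det(a^{k'}(φ) − λI_{2m})` equals the union over `ψ` of the zero sets of
`det(a^k(ψ) − λI_m)`. -/
theorem period_doubling
    (m : ℕ) (hm : 1 ≤ m) (k : ℕ → ℂ) (hk : ∀ i < m, k i = 1 ∨ k i = -1)
    (k' : ℕ → ℂ) (hk' : ∀ j, k' j = k (j % m)) :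
    (∏ j ∈ Finset.range (2 * m), k' j = 1) ∧
    (∀ j : ℕ, k' (j % (2 * m)) = k (j % m)) ∧
    {lam : ℂ | ∃ φ ∈ Set.Ico (0 : ℝ) (2 * Real.pi),
        (symb (2 * m) k' φ - lam • 1).det = 0} =
      {lam : ℂ | ∃ ψ ∈ Set.Ico (0 : ℝ) (2 * Real.pi),
        (symb m k ψ - lam • 1).det = 0} := by
  have hpi := Real.pi_pos
  refine ⟨?_, ?_, ?_⟩
  · have hsplit : ∏ j ∈ Finset.range (2 * m), k' j = (∏ j ∈ Finset.range m, k j) ^ 2 := by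
      rw [two_mul, Finset.prod_range_add]
      have e1 : ∀ j ∈ Finset.range m, k' j = k j := fun j hj => by
        rw [hk', Nat.mod_eq_of_lt (Finset.mem_range.mp hj)]
      have e2 : ∀ j ∈ Finset.range m, k' (m + j) = k j := fun j hj => by
        rw [hk', Nat.add_mod_left, Nat.mod_eq_of_lt (Finset.mem_range.mp hj)]
      rw [Finset.prod_congr rfl e1, Finset.prod_congr rfl e2, sq]
    rw [hsplit, ← Finset.prod_pow]
    apply Finset.prod_eq_one
    intro i hi
    rcases hk i (Finset.mem_range.mp hi) with h | h <;> rw [h] <;> norm_num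
  · intro j
    rw [hk', Nat.mod_mod_of_dvd j ⟨2, by ring⟩]
  · ext lam
    simp only [Set.mem_setOf_eq]
    constructor
    · rintro ⟨φ, ⟨hφ0, hφ2⟩, hdet⟩
      rw [PeriodDoubling.det_factor m hm k k' hk' φ lam] at hdet
      rcases mul_eq_zero.mp hdet with h | h
      · exact ⟨φ / 2, ⟨by linarith, by linarith⟩, h⟩
      · exact ⟨φ / 2 + Real.pi, ⟨by linarith, by linarith⟩, h⟩
    · rintro ⟨ψ, ⟨hψ0, hψ2⟩, hdet⟩
      by_cases hψ : ψ < Real.pi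
      · refine ⟨2 * ψ, ⟨by linarith, by linarith⟩, ?_⟩
        rw [PeriodDoubling.det_factor m hm k k' hk' (2 * ψ) lam,
          show (2 * ψ) / 2 = ψ by ring, hdet, zero_mul]
      · refine ⟨2 * ψ - 2 * Real.pi, ⟨by linarith, by linarith⟩, ?_⟩
        rw [PeriodDoubling.det_factor m hm k k' hk' (2 * ψ - 2 * Real.pi) lam,
          show (2 * ψ - 2 * Real.pi) / 2 + Real.pi = ψ by ring, hdet, mul_zero]
end
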